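/- arXiv:0812.5017 — 13 statements merged into one kernel-verified Lean document; each statement's English description precedes it below -/
import Mathlib

section
/- If f : X → Y satisfies f(nx+y) + f(nx−y) = n²f(x+y) + n²f(x−y) + 2f(nx) − 2n²f(x) − 2(n²−1)f(y) for all x, y ∈ X, then f is even, i.e. f(−y) = f(y) for all y ∈ X. -/
/-!
Putting `x = 0` in the equation gives `(n² - 1) • (f (-y) - f y) = 2 (n² - 1) • f 0`, and putting
also `y = 0` shows that the right-hand side vanishes. Since `n² ≠ 1` and a real vector space is
torsion-free, `f (-y) = f y`.
-/

theorem sq_sub_one_zsmul_neg_sub_eq_zero {X Y : Type*} [AddCommGroup X] [AddCommGroup Y]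
    (n : ℤ) (f : X → Y)
    (hf : ∀ x y : X, f (n • x + y) + f (n • x - y) =
      (n ^ 2) • f (x + y) + (n ^ 2) • f (x - y) + (2 : ℤ) • f (n • x)
        - (2 * n ^ 2) • f x - (2 * (n ^ 2 - 1)) • f y) (y : X) :
    (n ^ 2 - 1) • (f (-y) - f y) = 0 := by
  have h00 := hf 0 0
  have h0y := hf 0 y
  simp only [smul_zero, zero_add, zero_sub, add_zero, sub_zero] at h00 h0y
  linear_combination (norm := module) h00 - h0y

theorem Int.sq_sub_one_ne_zero {n : ℤ} (hn1 : n ≠ 1) (hn2 : n ≠ -1) : n ^ 2 - 1 ≠ 0 :=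
  sub_ne_zero.2 fun h => (sq_eq_one_iff.1 h).elim hn1 hn2

theorem even_of_quadratic_functional_eq {X Y : Type*} [AddCommGroup X] [AddCommGroup Y]
    [IsAddTorsionFree Y] {n : ℤ} (hn1 : n ≠ 1) (hn2 : n ≠ -1) (f : X → Y)
    (hf : ∀ x y : X, f (n • x + y) + f (n • x - y) =
      (n ^ 2) • f (x + y) + (n ^ 2) • f (x - y) + (2 : ℤ) • f (n • x)
        - (2 * n ^ 2) • f x - (2 * (n ^ 2 - 1)) • f y) (y : X) :
    f (-y) = f y :=
  sub_eq_zero.1 <| (IsAddTorsionFree.zsmul_eq_zero_iff_right (Int.sq_sub_one_ne_zero hn1 hn2)).1 <|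
    sq_sub_one_zsmul_neg_sub_eq_zero n f hf y

theorem stmt_1_general {X Y : Type*} [AddCommGroup X] [AddCommGroup Y] [Module ℝ Y]
    (n : ℤ) (hn1 : n ≠ 1) (hn2 : n ≠ -1) (f : X → Y)
    (hf : ∀ x y : X, f (n • x + y) + f (n • x - y) =
      (n ^ 2) • f (x + y) + (n ^ 2) • f (x - y) + (2 : ℤ) • f (n • x)
        - (2 * n ^ 2) • f x - (2 * (n ^ 2 - 1)) • f y) :
    ∀ y : X, f (-y) = f y :=
  have : IsAddTorsionFree Y := .of_isTorsionFree ℝ Y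
  even_of_quadratic_functional_eq hn1 hn2 f hf

theorem stmt_1 {X Y : Type*} [AddCommGroup X] [Module ℝ X] [AddCommGroup Y] [Module ℝ Y]
    (n : ℤ) (hn0 : n ≠ 0) (hn1 : n ≠ 1) (hn2 : n ≠ -1) (f : X → Y)
    (hf : ∀ x y : X, f (n • x + y) + f (n • x - y) =
      (n ^ 2) • f (x + y) + (n ^ 2) • f (x - y) + (2 : ℤ) • f (n • x)
        - (2 * n ^ 2) • f x - (2 * (n ^ 2 - 1)) • f y) :
    ∀ y : X, f (-y) = f y :=
  stmt_1_general n hn1 hn2 f hf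
end

section
/- If f : X → Y satisfies f(nx+y) + f(nx−y) = n²f(x+y) + n²f(x−y) + 2f(nx) − 2n²f(x) − 2(n²−1)f(y) for all x, y ∈ X, then f satisfies f(nx+ny) + f(nx−ny) = n⁴f(x+y) + n⁴f(x−y) + 2f(ny) + 2f(nx) − 2n⁴f(x) − 2n⁴f(y) for all x, y ∈ X. -/
/-! Put `y := n • y` in the equation, and expand the two resulting terms `f (x ± n • y)` by the
equation at `(y, x)`. The latter produces `f (y - x)` and `f (n • y - x)`, so one first shows
that `f` is even: the equation at `(0, 0)` gives `f 0 = 0`, and at `(0, z)` it becomes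
`(n ^ 2 - 1) • (f (-z) - f z) = 0`. -/

section

variable {X Y : Type*} [AddCommGroup X] [AddCommGroup Y]

/-- Quadratic maps and quartic maps both satisfy this equation. -/
def IsMixedQuadQuartic (n : ℤ) (f : X → Y) : Prop :=
  ∀ x y : X, f (n • x + y) + f (n • x - y) =
    (n ^ 2) • f (x + y) + (n ^ 2) • f (x - y) + (2 : ℤ) • f (n • x)
      - (2 * n ^ 2) • f x - (2 * (n ^ 2 - 1)) • f y

namespace IsMixedQuadQuartic

variable [IsAddTorsionFree Y] {n : ℤ} {f : X → Y}

theorem map_zero (hf : IsMixedQuadQuartic n f) (hn : n ^ 2 ≠ 1) : f 0 = 0 := by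
  have h := hf 0 0
  simp only [smul_zero, add_zero, sub_zero] at h
  have h' : (2 * (n ^ 2 - 1)) • f 0 = 0 := by linear_combination (norm := module) h
  exact (smul_eq_zero.mp h').resolve_left (by grind)

theorem map_neg (hf : IsMixedQuadQuartic n f) (hn : n ^ 2 ≠ 1) (z : X) : f (-z) = f z := by
  have h := hf 0 z
  simp only [smul_zero, zero_add, zero_sub, hf.map_zero hn] at h
  have h' : (n ^ 2 - 1) • (f (-z) - f z) = 0 := by linear_combination (norm := module) -h
  exact sub_eq_zero.mp ((smul_eq_zero.mp h').resolve_left (sub_ne_zero.mpr hn))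

theorem map_zsmul_add_zsmul (hf : IsMixedQuadQuartic n f) (hn : n ^ 2 ≠ 1) (x y : X) :
    f (n • x + n • y) + f (n • x - n • y) =
      (n ^ 4) • f (x + y) + (n ^ 4) • f (x - y) + (2 : ℤ) • f (n • y) + (2 : ℤ) • f (n • x)
        - (2 * n ^ 4) • f x - (2 * n ^ 4) • f y := by
  have h₁ := hf x (n • y)
  have h₂ := hf y x
  rw [add_comm y x, add_comm (n • y) x, ← hf.map_neg hn (y - x), neg_sub,
    ← hf.map_neg hn (n • y - x), neg_sub] at h₂
  linear_combination (norm := module) h₁ + (n ^ 2) • h₂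

end IsMixedQuadQuartic

end

theorem stmt_2_general {X Y : Type*} [AddCommGroup X] [AddCommGroup Y] [Module ℝ Y]
    (n : ℤ) (hn1 : n ≠ 1) (hn2 : n ≠ -1) (f : X → Y)
    (hf : ∀ x y : X, f (n • x + y) + f (n • x - y) =
      (n ^ 2) • f (x + y) + (n ^ 2) • f (x - y) + (2 : ℤ) • f (n • x)
        - (2 * n ^ 2) • f x - (2 * (n ^ 2 - 1)) • f y) :
    ∀ x y : X, f (n • x + n • y) + f (n • x - n • y) =
      (n ^ 4) • f (x + y) + (n ^ 4) • f (x - y) + (2 : ℤ) • f (n • y) + (2 : ℤ) • f (n • x)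
        - (2 * n ^ 4) • f x - (2 * n ^ 4) • f y := by
  have : IsAddTorsionFree Y := .of_isTorsionFree ℝ Y
  have hn : n ^ 2 ≠ 1 := by simp [sq_eq_one_iff, hn1, hn2]
  exact IsMixedQuadQuartic.map_zsmul_add_zsmul hf hn

theorem stmt_2 {X Y : Type*} [AddCommGroup X] [Module ℝ X] [AddCommGroup Y] [Module ℝ Y]
    (n : ℤ) (hn0 : n ≠ 0) (hn1 : n ≠ 1) (hn2 : n ≠ -1) (f : X → Y)
    (hf : ∀ x y : X, f (n • x + y) + f (n • x - y) =
      (n ^ 2) • f (x + y) + (n ^ 2) • f (x - y) + (2 : ℤ) • f (n • x)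
        - (2 * n ^ 2) • f x - (2 * (n ^ 2 - 1)) • f y) :
    ∀ x y : X, f (n • x + n • y) + f (n • x - n • y) =
      (n ^ 4) • f (x + y) + (n ^ 4) • f (x - y) + (2 : ℤ) • f (n • y) + (2 : ℤ) • f (n • x)
        - (2 * n ^ 4) • f x - (2 * n ^ 4) • f y :=
  stmt_2_general n hn1 hn2 f hf
end

section
/- If f : X → Y satisfies f(nx+y) + f(nx−y) = n²f(x+y) + n²f(x−y) + 2f(nx) − 2n²f(x) − 2(n²−1)f(y) for all x, y ∈ X, then f satisfies f(x+2y) + f(x−2y) = 4f(x+y) + 4f(x−y) + 2f(2y) − 8f(y) − 6f(x) for all x, y ∈ X. -/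
/-!
Write `D u v = f (u + v) + f (u - v) - 2 f u - 2 f v`. The hypothesis says exactly that
`D (n u) v = n² D u v`; at `u = 0` this forces `D 0 v = 0`, i.e. `f 0 = 0` and `f` even, so `D` is
symmetric and `n²`-homogeneous in each variable. The conclusion says that each `D · w` again
satisfies the quadratic equation, i.e. that its defect `Q` vanishes. For even `f`, expanding the
defect of `D · v` at `(u, w)` gives an expression symmetric in `v` and `w`; at `(n u, v, n w)`
this yields `Q (n u) v = Q u v`. As `Q` is symmetric and `Q (n u) (n v) = n² Q u v`, we get
`n² Q = Q`, hence `Q = 0` because `n² ≠ 1` and `Y` is torsion-free.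
-/

section QuadDefect

variable {X Y : Type*} [AddCommGroup X] [AddCommGroup Y]

def quadDefect (f : X → Y) (u v : X) : Y :=
  f (u + v) + f (u - v) - (2 : ℤ) • f u - (2 : ℤ) • f v

variable {f : X → Y}

lemma quadDefect_comm (hf : f.Even) (u v : X) : quadDefect f u v = quadDefect f v u := by
  simp only [quadDefect]
  rw [← hf (u - v), neg_sub, add_comm u v]
  abel

lemma quadDefect_neg_left (hf : f.Even) (u v : X) : quadDefect f (-u) v = quadDefect f u v := by
  simp only [quadDefect]
  rw [← hf (-u + v), ← hf (-u - v), hf u]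
  abel_nf

lemma quadDefect_zsmul (c : ℤ) (u v : X) :
    quadDefect (fun x ↦ c • f x) u v = c • quadDefect f u v := by
  simp only [quadDefect]
  module

lemma quadDefect_zsmul_zsmul {n c : ℤ} (h : ∀ x, f (n • x) = c • f x) (u v : X) :
    quadDefect f (n • u) (n • v) = c • quadDefect f u v := by
  simp only [quadDefect, ← smul_add, ← smul_sub, h]
  module

lemma quadDefect_quadDefect_comm (hf : f.Even) (u v w : X) :
    quadDefect (quadDefect f · v) u w = quadDefect (quadDefect f · w) u v := by
  simp only [quadDefect]
  rw [← hf (w - v), neg_sub, add_right_comm u w v, add_sub_right_comm u w v,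
    sub_add_eq_add_sub u w v, sub_right_comm u w v, add_comm w v]
  abel

lemma quadDefect_zsmul_right {n : ℤ} (hf : f.Even)
    (hscale : ∀ u v, quadDefect f (n • u) v = n ^ 2 • quadDefect f u v) (u v : X) :
    quadDefect f u (n • v) = n ^ 2 • quadDefect f u v := by
  rw [quadDefect_comm hf, hscale, quadDefect_comm hf]

lemma map_zero_of_quadDefect_zero_left [IsAddTorsionFree Y] (h : ∀ v, quadDefect f 0 v = 0) :
    f 0 = 0 := by
  have h0 : (-2 : ℤ) • f 0 = 0 := by
    rw [← h 0]
    simp only [quadDefect, add_zero, sub_zero]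
    module
  exact (IsAddTorsionFree.zsmul_eq_zero_iff_right (by norm_num)).mp h0

lemma even_of_quadDefect_zero_left [IsAddTorsionFree Y] (h : ∀ v, quadDefect f 0 v = 0) :
    f.Even := by
  intro v
  have hv := h v
  simp only [quadDefect, zero_add, zero_sub, map_zero_of_quadDefect_zero_left h] at hv
  linear_combination (norm := module) hv

end QuadDefect

section Homogeneous

variable {X Y : Type*} [AddCommGroup X] [AddCommGroup Y] [IsAddTorsionFree Y]
  {f : X → Y} {n : ℤ}

lemma quadDefect_zero_left_of_zsmul_left (hn : n ^ 2 ≠ 1)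
    (hscale : ∀ u v, quadDefect f (n • u) v = n ^ 2 • quadDefect f u v) (v : X) :
    quadDefect f 0 v = 0 := by
  have h : (n ^ 2 - 1) • quadDefect f 0 v = 0 := by
    rw [sub_smul, one_smul, ← hscale, smul_zero, sub_self]
  exact (IsAddTorsionFree.zsmul_eq_zero_iff_right (sub_ne_zero.mpr hn)).mp h

lemma quadDefect_quadDefect_zsmul_left (hn : n ≠ 0) (hf : f.Even)
    (hscale : ∀ u v, quadDefect f (n • u) v = n ^ 2 • quadDefect f u v) (u v w : X) :
    quadDefect (quadDefect f · w) (n • u) v = quadDefect (quadDefect f · w) u v := by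
  have key := quadDefect_quadDefect_comm hf (n • u) v (n • w)
  rw [quadDefect_zsmul_zsmul (hscale · v), quadDefect_quadDefect_comm hf,
    funext (quadDefect_zsmul_right hf hscale · w), quadDefect_zsmul] at key
  exact (zsmul_right_injective (pow_ne_zero 2 hn) key).symm

lemma quadDefect_quadDefect_eq_zero (hn0 : n ≠ 0) (hn1 : n ^ 2 ≠ 1) (hf : f.Even)
    (hscale : ∀ u v, quadDefect f (n • u) v = n ^ 2 • quadDefect f u v) (u v w : X) :
    quadDefect (quadDefect f w) u v = 0 := by
  set Q := quadDefect (quadDefect f · w)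
  have hQ : quadDefect (quadDefect f w) = Q := by
    rw [funext (quadDefect_comm hf w)]
  have hQcomm (a b : X) : Q a b = Q b a :=
    quadDefect_comm (fun x ↦ quadDefect_neg_left hf x w) a b
  have hQinv (a b : X) : Q (n • a) b = Q a b :=
    quadDefect_quadDefect_zsmul_left hn0 hf hscale a b w
  have hQhom : Q (n • u) (n • v) = n ^ 2 • Q u v := quadDefect_zsmul_zsmul (hscale · w) u v
  have h : (n ^ 2 - 1) • Q u v = 0 := by
    rw [sub_smul, one_smul, ← hQhom, hQinv, hQcomm, hQinv, hQcomm, sub_self]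
  rw [hQ]
  exact (IsAddTorsionFree.zsmul_eq_zero_iff_right (sub_ne_zero.mpr hn1)).mp h

end Homogeneous

theorem stmt_3_general {X Y : Type*} [AddCommGroup X] [AddCommGroup Y] [Module ℝ Y]
    (n : ℤ) (hn0 : n ≠ 0) (hn1 : n ≠ 1) (hn2 : n ≠ -1) (f : X → Y)
    (hf : ∀ x y : X, f (n • x + y) + f (n • x - y) =
      (n ^ 2) • f (x + y) + (n ^ 2) • f (x - y) + (2 : ℤ) • f (n • x)
        - (2 * n ^ 2) • f x - (2 * (n ^ 2 - 1)) • f y) :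
    ∀ x y : X, f (x + (2 : ℤ) • y) + f (x - (2 : ℤ) • y) =
      (4 : ℤ) • f (x + y) + (4 : ℤ) • f (x - y) + (2 : ℤ) • f ((2 : ℤ) • y)
        - (8 : ℤ) • f y - (6 : ℤ) • f x := by
  intro x y
  have : IsAddTorsionFree Y := .of_isTorsionFree ℝ Y
  have hn : n ^ 2 ≠ 1 := by simp [sq_eq_one_iff, hn1, hn2]
  have hscale (u v : X) : quadDefect f (n • u) v = n ^ 2 • quadDefect f u v := by
    simp only [quadDefect]
    linear_combination (norm := module) hf u v
  have hD0 := quadDefect_zero_left_of_zsmul_left hn hscale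
  have key := quadDefect_quadDefect_eq_zero hn0 hn (even_of_quadDefect_zero_left hD0) hscale y y x
  simp only [quadDefect, add_zero, sub_self, sub_zero, map_zero_of_quadDefect_zero_left hD0] at key
  rw [two_zsmul y]
  linear_combination (norm := module) key

theorem stmt_3 {X Y : Type*} [AddCommGroup X] [Module ℝ X] [AddCommGroup Y] [Module ℝ Y]
    (n : ℤ) (hn0 : n ≠ 0) (hn1 : n ≠ 1) (hn2 : n ≠ -1) (f : X → Y)
    (hf : ∀ x y : X, f (n • x + y) + f (n • x - y) =
      (n ^ 2) • f (x + y) + (n ^ 2) • f (x - y) + (2 : ℤ) • f (n • x)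
        - (2 * n ^ 2) • f x - (2 * (n ^ 2 - 1)) • f y) :
    ∀ x y : X, f (x + (2 : ℤ) • y) + f (x - (2 : ℤ) • y) =
      (4 : ℤ) • f (x + y) + (4 : ℤ) • f (x - y) + (2 : ℤ) • f ((2 : ℤ) • y)
        - (8 : ℤ) • f y - (6 : ℤ) • f x :=
  stmt_3_general n hn0 hn1 hn2 f hf
end

section
/- Suppose f : X → Y is even, f(0) = 0, and f satisfies f(2x+y) + f(2x−y) = 4f(x+y) + 4f(x−y) + 2f(2x) − 8f(x) − 6f(y) for all x, y ∈ X. Then the function g defined by g(x) = f(2x) − 16f(x) is quadratic, i.e. g(x+y) + g(x−y) = 2g(x) + 2g(y) for all x, y ∈ X. -/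
/-!
Substituting `(x, 2y)` into the equation expresses `f (2x + 2y) + f (2x - 2y)` through
`f (x + 2y) + f (x - 2y)`; substituting `(y, x)` and using evenness expresses the latter through
`f (x + y) + f (x - y)`. Combining the two, every term of
`g (x + y) + g (x - y) - 2 g x - 2 g y` cancels.
-/

theorem map_add_two_smul_add_map_sub_two_smul {X Y : Type*} [AddCommGroup X] [AddCommGroup Y]
    {f : X → Y} (heven : ∀ x : X, f (-x) = f x)
    (hf : ∀ x y : X, f ((2 : ℤ) • x + y) + f ((2 : ℤ) • x - y) =
      (4 : ℤ) • f (x + y) + (4 : ℤ) • f (x - y) + (2 : ℤ) • f ((2 : ℤ) • x)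
        - (8 : ℤ) • f x - (6 : ℤ) • f y)
    (x y : X) :
    f (x + (2 : ℤ) • y) + f (x - (2 : ℤ) • y) =
      (4 : ℤ) • f (x + y) + (4 : ℤ) • f (x - y) + (2 : ℤ) • f ((2 : ℤ) • y)
        - (8 : ℤ) • f y - (6 : ℤ) • f x := by
  have h := hf y x
  rwa [add_comm _ x, add_comm y x, ← heven ((2 : ℤ) • y - x), ← heven (y - x), neg_sub, neg_sub] at h

theorem stmt_4_general {X Y : Type*} [AddCommGroup X] [AddCommGroup Y]
    (f : X → Y) (heven : ∀ x : X, f (-x) = f x)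
    (hf : ∀ x y : X, f ((2 : ℤ) • x + y) + f ((2 : ℤ) • x - y) =
      (4 : ℤ) • f (x + y) + (4 : ℤ) • f (x - y) + (2 : ℤ) • f ((2 : ℤ) • x)
        - (8 : ℤ) • f x - (6 : ℤ) • f y)
    (g : X → Y) (hg : ∀ x : X, g x = f ((2 : ℤ) • x) - (16 : ℤ) • f x) :
    ∀ x y : X, g (x + y) + g (x - y) = (2 : ℤ) • g x + (2 : ℤ) • g y := by
  intro x y
  have hdouble := hf x ((2 : ℤ) • y)
  have hswap := map_add_two_smul_add_map_sub_two_smul heven hf x y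
  rw [hg, hg, hg, hg, smul_add, smul_sub]
  linear_combination (norm := module) hdouble + (4 : ℤ) • hswap

theorem stmt_4 {X Y : Type*} [AddCommGroup X] [Module ℝ X] [AddCommGroup Y] [Module ℝ Y]
    (f : X → Y) (heven : ∀ x : X, f (-x) = f x) (h0 : f 0 = 0)
    (hf : ∀ x y : X, f ((2 : ℤ) • x + y) + f ((2 : ℤ) • x - y) =
      (4 : ℤ) • f (x + y) + (4 : ℤ) • f (x - y) + (2 : ℤ) • f ((2 : ℤ) • x)
        - (8 : ℤ) • f x - (6 : ℤ) • f y)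
    (g : X → Y) (hg : ∀ x : X, g x = f ((2 : ℤ) • x) - (16 : ℤ) • f x) :
    ∀ x y : X, g (x + y) + g (x - y) = (2 : ℤ) • g x + (2 : ℤ) • g y :=
  stmt_4_general f heven hf g hg
end

section
/- Suppose f : X → Y is even, f(0) = 0, and f satisfies f(2x+y) + f(2x−y) = 4f(x+y) + 4f(x−y) + 2f(2x) − 8f(x) − 6f(y) for all x, y ∈ X. Then f(4x) = 20f(2x) − 64f(x) for all x ∈ X. -/
/-!
Put `y = x` in the functional equation to get `f (3x) = 6 f (2x) - 15 f x`, then put `y = 2x`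
and use evenness to eliminate `f (-x)`; substituting the first identity into the second gives the
claim.
-/

section

variable {X Y : Type*} [AddCommGroup X] [AddCommGroup Y]

/-- The functional equation of the theorem, satisfied by `x ↦ a x² + b x⁴`. -/
def SatisfiesQuadraticQuarticEq (f : X → Y) : Prop :=
  ∀ x y : X, f ((2 : ℤ) • x + y) + f ((2 : ℤ) • x - y) =
    (4 : ℤ) • f (x + y) + (4 : ℤ) • f (x - y) + (2 : ℤ) • f ((2 : ℤ) • x)
      - (8 : ℤ) • f x - (6 : ℤ) • f y

variable {f : X → Y}

theorem SatisfiesQuadraticQuarticEq.apply_three_zsmul (hf : SatisfiesQuadraticQuarticEq f)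
    (h0 : f 0 = 0) (x : X) :
    f ((3 : ℤ) • x) = (6 : ℤ) • f ((2 : ℤ) • x) - (15 : ℤ) • f x := by
  have h := hf x x
  rw [show (2 : ℤ) • x + x = (3 : ℤ) • x by module, show (2 : ℤ) • x - x = x by module,
    show x + x = (2 : ℤ) • x by module, sub_self, h0] at h
  linear_combination (norm := module) h

theorem SatisfiesQuadraticQuarticEq.apply_four_zsmul (hf : SatisfiesQuadraticQuarticEq f)
    (heven : ∀ x : X, f (-x) = f x) (h0 : f 0 = 0) (x : X) :
    f ((4 : ℤ) • x) = (20 : ℤ) • f ((2 : ℤ) • x) - (64 : ℤ) • f x := by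
  have h := hf x ((2 : ℤ) • x)
  rw [show (2 : ℤ) • x + (2 : ℤ) • x = (4 : ℤ) • x by module, sub_self,
    show x + (2 : ℤ) • x = (3 : ℤ) • x by module, show x - (2 : ℤ) • x = -x by module,
    h0, heven, hf.apply_three_zsmul h0] at h
  linear_combination (norm := module) h

end

theorem stmt_5_general {X Y : Type*} [AddCommGroup X] [AddCommGroup Y]
    (f : X → Y) (heven : ∀ x : X, f (-x) = f x) (h0 : f 0 = 0)
    (hf : ∀ x y : X, f ((2 : ℤ) • x + y) + f ((2 : ℤ) • x - y) =
      (4 : ℤ) • f (x + y) + (4 : ℤ) • f (x - y) + (2 : ℤ) • f ((2 : ℤ) • x)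
        - (8 : ℤ) • f x - (6 : ℤ) • f y) :
    ∀ x : X, f ((4 : ℤ) • x) = (20 : ℤ) • f ((2 : ℤ) • x) - (64 : ℤ) • f x :=
  SatisfiesQuadraticQuarticEq.apply_four_zsmul hf heven h0

theorem stmt_5 {X Y : Type*} [AddCommGroup X] [Module ℝ X] [AddCommGroup Y] [Module ℝ Y]
    (f : X → Y) (heven : ∀ x : X, f (-x) = f x) (h0 : f 0 = 0)
    (hf : ∀ x y : X, f ((2 : ℤ) • x + y) + f ((2 : ℤ) • x - y) =
      (4 : ℤ) • f (x + y) + (4 : ℤ) • f (x - y) + (2 : ℤ) • f ((2 : ℤ) • x)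
        - (8 : ℤ) • f x - (6 : ℤ) • f y) :
    ∀ x : X, f ((4 : ℤ) • x) = (20 : ℤ) • f ((2 : ℤ) • x) - (64 : ℤ) • f x :=
  stmt_5_general f heven h0 hf
end

section
/- Suppose f : X → Y is even, f(0) = 0, and f satisfies f(2x+y) + f(2x−y) = 4f(x+y) + 4f(x−y) + 2f(2x) − 8f(x) − 6f(y) for all x, y ∈ X. Then the function h defined by h(x) = f(2x) − 4f(x) is quartic, i.e. h(2x+y) + h(2x−y) = 4h(x+y) + 4h(x−y) + 24h(x) − 6h(y) for all x, y ∈ X. -/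
/-!
Writing `E f x y = 0` for the equation, `h x = f (2x) - 4 f x` satisfies
`Q h x y = E f (2x) (2y) - 4 E f x y + 2 (f (4x) - 20 f (2x) + 64 f x)` identically, where
`Q h x y = 0` is the quartic equation. The last bracket vanishes: the equation at `(x, x)` gives
`f (3x)` and then the equation at `(x, 2x)`, with `f` even and `f 0 = 0`, gives `f (4x)`.
-/

section

variable {X Y : Type*} [AddCommGroup X] [AddCommGroup Y]

/-- The mixed quadratic-quartic functional equation, solved by `x ↦ a x ^ 2 + b x ^ 4`. -/
def SolvesQuadraticQuarticEq (f : X → Y) : Prop :=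
  ∀ x y : X, f ((2 : ℤ) • x + y) + f ((2 : ℤ) • x - y) =
    (4 : ℤ) • f (x + y) + (4 : ℤ) • f (x - y) + (2 : ℤ) • f ((2 : ℤ) • x)
      - (8 : ℤ) • f x - (6 : ℤ) • f y

namespace SolvesQuadraticQuarticEq

variable {f : X → Y}

theorem apply_three_zsmul (hf : SolvesQuadraticQuarticEq f) (h0 : f 0 = 0) (x : X) :
    f ((3 : ℤ) • x) = (6 : ℤ) • f ((2 : ℤ) • x) - (15 : ℤ) • f x := by
  have hxx := hf x x
  rw [show (2 : ℤ) • x + x = (3 : ℤ) • x by module, show (2 : ℤ) • x - x = x by module,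
    sub_self, h0, ← two_zsmul] at hxx
  linear_combination (norm := module) hxx

theorem apply_four_zsmul (hf : SolvesQuadraticQuarticEq f) (heven : ∀ x : X, f (-x) = f x)
    (h0 : f 0 = 0) (x : X) :
    f ((4 : ℤ) • x) = (20 : ℤ) • f ((2 : ℤ) • x) - (64 : ℤ) • f x := by
  have hx2x := hf x ((2 : ℤ) • x)
  rw [show (2 : ℤ) • x + (2 : ℤ) • x = (4 : ℤ) • x by module, sub_self, h0,
    show x + (2 : ℤ) • x = (3 : ℤ) • x by module, show x - (2 : ℤ) • x = -x by module,
    heven, hf.apply_three_zsmul h0] at hx2x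
  linear_combination (norm := module) hx2x

theorem quartic_apply_two_zsmul_sub_four_zsmul (hf : SolvesQuadraticQuarticEq f)
    (heven : ∀ x : X, f (-x) = f x) (h0 : f 0 = 0) (x y : X) :
    let h := fun x : X ↦ f ((2 : ℤ) • x) - (4 : ℤ) • f x
    h ((2 : ℤ) • x + y) + h ((2 : ℤ) • x - y) =
      (4 : ℤ) • h (x + y) + (4 : ℤ) • h (x - y) + (24 : ℤ) • h x - (6 : ℤ) • h y := by
  have hfour : (2 : ℤ) • (2 : ℤ) • x = (4 : ℤ) • x := by module
  have hdouble := hf ((2 : ℤ) • x) ((2 : ℤ) • y)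
  rw [hfour, hf.apply_four_zsmul heven h0] at hdouble
  simp only [smul_add, smul_sub, hfour]
  linear_combination (norm := module) hdouble - (4 : ℤ) • hf x y

end SolvesQuadraticQuarticEq

end

theorem stmt_6_general {X Y : Type*} [AddCommGroup X] [AddCommGroup Y]
    (f : X → Y) (heven : ∀ x : X, f (-x) = f x) (h0 : f 0 = 0)
    (hf : ∀ x y : X, f ((2 : ℤ) • x + y) + f ((2 : ℤ) • x - y) =
      (4 : ℤ) • f (x + y) + (4 : ℤ) • f (x - y) + (2 : ℤ) • f ((2 : ℤ) • x)
        - (8 : ℤ) • f x - (6 : ℤ) • f y)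
    (h : X → Y) (hh : ∀ x : X, h x = f ((2 : ℤ) • x) - (4 : ℤ) • f x) :
    ∀ x y : X, h ((2 : ℤ) • x + y) + h ((2 : ℤ) • x - y) =
      (4 : ℤ) • h (x + y) + (4 : ℤ) • h (x - y) + (24 : ℤ) • h x - (6 : ℤ) • h y := by
  obtain rfl : h = fun x ↦ f ((2 : ℤ) • x) - (4 : ℤ) • f x := funext hh
  exact SolvesQuadraticQuarticEq.quartic_apply_two_zsmul_sub_four_zsmul hf heven h0

theorem stmt_6 {X Y : Type*} [AddCommGroup X] [Module ℝ X] [AddCommGroup Y] [Module ℝ Y]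
    (f : X → Y) (heven : ∀ x : X, f (-x) = f x) (h0 : f 0 = 0)
    (hf : ∀ x y : X, f ((2 : ℤ) • x + y) + f ((2 : ℤ) • x - y) =
      (4 : ℤ) • f (x + y) + (4 : ℤ) • f (x - y) + (2 : ℤ) • f ((2 : ℤ) • x)
        - (8 : ℤ) • f x - (6 : ℤ) • f y)
    (h : X → Y) (hh : ∀ x : X, h x = f ((2 : ℤ) • x) - (4 : ℤ) • f x) :
    ∀ x y : X, h ((2 : ℤ) • x + y) + h ((2 : ℤ) • x - y) =
      (4 : ℤ) • h (x + y) + (4 : ℤ) • h (x - y) + (24 : ℤ) • h x - (6 : ℤ) • h y :=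
  stmt_6_general f heven h0 hf h hh
end

section
/- If there exist a symmetric multi-additive function D : X⁴ → Y and a symmetric bi-additive function B : X² → Y such that f(x) = D(x,x,x,x) + B(x,x) for all x ∈ X, then f satisfies the functional equation f(nx+y) + f(nx−y) = n²f(x+y) + n²f(x−y) + 2f(nx) − 2n²f(x) − 2(n²−1)f(y) for all x, y ∈ X. -/
/-! Both sides of the equation only evaluate `f` at integer combinations `a • x + b • y`.
By multi-additivity and symmetry, `f (a • x + b • y)` is a combination of the five values
`D x x x x, D x x x y, D x x y y, D x y y y, D y y y y` and the three values
`B x x, B x y, B y y`, with coefficients `a⁴, 4a³b, 6a²b², 4ab³, b⁴` and `a², 2ab, b²`.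
After this expansion the equation reduces to polynomial identities in `n`. -/

section Multiadditive

variable {X Y : Type*} [AddCommGroup X] [AddCommGroup Y]

theorem map_zsmul_of_map_add (g : X → Y) (hg : ∀ a a', g (a + a') = g a + g a') (m : ℤ)
    (a : X) : g (m • a) = m • g a :=
  (AddMonoidHom.mk' g hg).map_zsmul m a

theorem biadditive_diag_zsmul_add_zsmul (B : X → X → Y)
    (Badd : ∀ a a' b : X, B (a + a') b = B a b + B a' b) (Bsym : ∀ a b : X, B a b = B b a)
    (a b : ℤ) (x y : X) :
    B (a • x + b • y) (a • x + b • y) =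
      (a ^ 2) • B x x + (2 * a * b) • B x y + (b ^ 2) • B y y := by
  have Badd₂ (u v v' : X) : B u (v + v') = B u v + B u v' := by
    rw [Bsym, Badd, Bsym v, Bsym v']
  have Bsmul₁ (m : ℤ) (u v : X) : B (m • u) v = m • B u v :=
    map_zsmul_of_map_add (B · v) (Badd · · v) m u
  have Bsmul₂ (m : ℤ) (u v : X) : B u (m • v) = m • B u v :=
    map_zsmul_of_map_add (B u) (Badd₂ u) m v
  simp only [Badd, Badd₂, Bsmul₁, Bsmul₂, Bsym y x]
  module

theorem quadriadditive_diag_zsmul_add_zsmul (D : X → X → X → X → Y)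
    (Dadd : ∀ a a' b c d : X, D (a + a') b c d = D a b c d + D a' b c d)
    (Dsym12 : ∀ a b c d : X, D a b c d = D b a c d)
    (Dsym23 : ∀ a b c d : X, D a b c d = D a c b d)
    (Dsym34 : ∀ a b c d : X, D a b c d = D a b d c)
    (a b : ℤ) (x y : X) :
    D (a • x + b • y) (a • x + b • y) (a • x + b • y) (a • x + b • y) =
      (a ^ 4) • D x x x x + (4 * a ^ 3 * b) • D x x x y + (6 * a ^ 2 * b ^ 2) • D x x y y +
        (4 * a * b ^ 3) • D x y y y + (b ^ 4) • D y y y y := by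
  have Dadd₂ (u w w' c d : X) : D u (w + w') c d = D u w c d + D u w' c d := by
    rw [Dsym12, Dadd, Dsym12 w, Dsym12 w']
  have Dadd₃ (u w c c' d : X) : D u w (c + c') d = D u w c d + D u w c' d := by
    rw [Dsym23, Dadd₂, Dsym23 u c, Dsym23 u c']
  have Dadd₄ (u w c d d' : X) : D u w c (d + d') = D u w c d + D u w c d' := by
    rw [Dsym34, Dadd₃, Dsym34 u w d, Dsym34 u w d']
  have Dsmul₁ (m : ℤ) (u w c d : X) : D (m • u) w c d = m • D u w c d :=
    map_zsmul_of_map_add (D · w c d) (Dadd · · w c d) m u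
  have Dsmul₂ (m : ℤ) (u w c d : X) : D u (m • w) c d = m • D u w c d :=
    map_zsmul_of_map_add (D u · c d) (Dadd₂ u · · c d) m w
  have Dsmul₃ (m : ℤ) (u w c d : X) : D u w (m • c) d = m • D u w c d :=
    map_zsmul_of_map_add (D u w · d) (Dadd₃ u w · · d) m c
  have Dsmul₄ (m : ℤ) (u w c d : X) : D u w c (m • d) = m • D u w c d :=
    map_zsmul_of_map_add (D u w c) (Dadd₄ u w c) m d
  -- Oriented transpositions `y x ↦ x y` bubble-sort every argument list into `x … x y … y`.
  have swap₁₂ (c d : X) : D y x c d = D x y c d := Dsym12 y x c d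
  have swap₂₃ (u d : X) : D u y x d = D u x y d := Dsym23 u y x d
  have swap₃₄ (u w : X) : D u w y x = D u w x y := Dsym34 u w y x
  simp only [Dadd, Dadd₂, Dadd₃, Dadd₄, Dsmul₁, Dsmul₂, Dsmul₃, Dsmul₄,
    swap₁₂, swap₂₃, swap₃₄]
  module

end Multiadditive

theorem stmt_8_general {X Y : Type*} [AddCommGroup X] [AddCommGroup Y]
    (n : ℤ) (f : X → Y)
    (D : X → X → X → X → Y)
    (Dadd : ∀ a a' b c d : X, D (a + a') b c d = D a b c d + D a' b c d)
    (Dsym12 : ∀ a b c d : X, D a b c d = D b a c d)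
    (Dsym23 : ∀ a b c d : X, D a b c d = D a c b d)
    (Dsym34 : ∀ a b c d : X, D a b c d = D a b d c)
    (B : X → X → Y)
    (Badd : ∀ a a' b : X, B (a + a') b = B a b + B a' b)
    (Bsym : ∀ a b : X, B a b = B b a)
    (hfDB : ∀ x : X, f x = D x x x x + B x x) :
    ∀ x y : X, f (n • x + y) + f (n • x - y) =
      (n ^ 2) • f (x + y) + (n ^ 2) • f (x - y) + (2 : ℤ) • f (n • x)
        - (2 * n ^ 2) • f x - (2 * (n ^ 2 - 1)) • f y := by
  intro x y
  have expand (a b : ℤ) : f (a • x + b • y) =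
      (a ^ 4) • D x x x x + (4 * a ^ 3 * b) • D x x x y + (6 * a ^ 2 * b ^ 2) • D x x y y +
        (4 * a * b ^ 3) • D x y y y + (b ^ 4) • D y y y y +
      ((a ^ 2) • B x x + (2 * a * b) • B x y + (b ^ 2) • B y y) := by
    rw [hfDB, quadriadditive_diag_zsmul_add_zsmul D Dadd Dsym12 Dsym23 Dsym34,
      biadditive_diag_zsmul_add_zsmul B Badd Bsym]
  have h₁ := expand n 1
  have h₂ := expand n (-1)
  have h₃ := expand 1 1
  have h₄ := expand 1 (-1)
  have h₅ := expand n 0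
  have h₆ := expand 1 0
  have h₇ := expand 0 1
  simp only [one_smul, zero_smul, add_zero, zero_add, neg_one_zsmul, ← sub_eq_add_neg]
    at h₁ h₂ h₃ h₄ h₅ h₆ h₇
  rw [h₁, h₂, h₃, h₄, h₅, h₆, h₇]
  module

theorem stmt_8 {X Y : Type*} [AddCommGroup X] [Module ℝ X] [AddCommGroup Y] [Module ℝ Y]
    (n : ℤ) (hn0 : n ≠ 0) (hn1 : n ≠ 1) (hn2 : n ≠ -1) (f : X → Y)
    (D : X → X → X → X → Y)
    (Dadd : ∀ a a' b c d : X, D (a + a') b c d = D a b c d + D a' b c d)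
    (Dsym12 : ∀ a b c d : X, D a b c d = D b a c d)
    (Dsym23 : ∀ a b c d : X, D a b c d = D a c b d)
    (Dsym34 : ∀ a b c d : X, D a b c d = D a b d c)
    (B : X → X → Y)
    (Badd : ∀ a a' b : X, B (a + a') b = B a b + B a' b)
    (Bsym : ∀ a b : X, B a b = B b a)
    (hfDB : ∀ x : X, f x = D x x x x + B x x) :
    ∀ x y : X, f (n • x + y) + f (n • x - y) =
      (n ^ 2) • f (x + y) + (n ^ 2) • f (x - y) + (2 : ℤ) • f (n • x)
        - (2 * n ^ 2) • f x - (2 * (n ^ 2 - 1)) • f y :=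
  stmt_8_general n f D Dadd Dsym12 Dsym23 Dsym34 B Badd Bsym hfDB
end

section
/- A function f : X → Y satisfies f(nx+y) + f(nx−y) = n²f(x+y) + n²f(x−y) + 2f(nx) − 2n²f(x) − 2(n²−1)f(y) for all x, y ∈ X if and only if there exist a symmetric multi-additive function D : X⁴ → Y and a symmetric bi-additive function B : X² → Y with f(x) = D(x,x,x,x) + B(x,x) for all x ∈ X. -/
/-!
Putting `x = 0` shows that a solution `f` is even with `f 0 = 0`. A combination of nine instances
of the equation is `n² (n² - 1)` times the statement that the quadratic defect
`P u w = f (u + w) + f (u - w) - 2 f u - 2 f w` satisfies the parallelogram law in `u`.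
Polarizing `P` in both arguments (Jordan–von Neumann) gives a 4-additive map `Q` that only depends
on the pairing `{{a, b}, {c, d}}` of its arguments, so its sum over the three pairings is a
symmetric 4-additive map with diagonal `48 P x x`. Since `P (a + b) (a + b) + P (a - b) (a - b)`
equals `2 P a a + 2 P b b + 12 P a b`, the function `f x - P x x / 12` satisfies the parallelogram
law and is the diagonal of a symmetric biadditive map. Conversely, the equation is linear in `f`
and both kinds of diagonals solve it.
-/

section
variable {X Y : Type*} [AddCommGroup X] [AddCommGroup Y]

def QuarticQuadraticEquation (n : ℤ) (f : X → Y) : Prop :=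
  ∀ x y : X, f (n • x + y) + f (n • x - y) =
    (n ^ 2) • f (x + y) + (n ^ 2) • f (x - y) + (2 : ℤ) • f (n • x)
      - (2 * n ^ 2) • f x - (2 * (n ^ 2 - 1)) • f y

theorem QuarticQuadraticEquation.add {n : ℤ} {f g : X → Y} (hf : QuarticQuadraticEquation n f)
    (hg : QuarticQuadraticEquation n g) : QuarticQuadraticEquation n (fun x => f x + g x) := by
  intro x y
  linear_combination (norm := module) hf x y + hg x y

structure IsSymmBiadditive (B : X → X → Y) : Prop where
  add₁ : ∀ a a' b, B (a + a') b = B a b + B a' b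
  comm : ∀ a b, B a b = B b a

structure IsSymmQuadriadditive (D : X → X → X → X → Y) : Prop where
  add₁ : ∀ a a' b c d, D (a + a') b c d = D a b c d + D a' b c d
  comm₁₂ : ∀ a b c d, D a b c d = D b a c d
  comm₂₃ : ∀ a b c d, D a b c d = D a c b d
  comm₃₄ : ∀ a b c d, D a b c d = D a b d c

namespace IsSymmBiadditive

variable {B : X → X → Y}

theorem add₂ (hB : IsSymmBiadditive B) (a b b' : X) : B a (b + b') = B a b + B a b' := by
  simp only [hB.comm a, hB.add₁]

theorem zsmul₁ (hB : IsSymmBiadditive B) (m : ℤ) (a b : X) : B (m • a) b = m • B a b :=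
  map_zsmul (AddMonoidHom.mk' (B · b) (hB.add₁ · · b)) m a

theorem zsmul₂ (hB : IsSymmBiadditive B) (m : ℤ) (a b : X) : B a (m • b) = m • B a b := by
  simp only [hB.comm a, hB.zsmul₁]

theorem diag_add_add_diag_sub (hB : IsSymmBiadditive B) (u v : X) :
    B (u + v) (u + v) + B (u - v) (u - v) = 2 • B u u + 2 • B v v := by
  simp only [sub_eq_add_neg, ← neg_one_zsmul v, hB.add₁, hB.add₂, hB.zsmul₁, hB.zsmul₂,
    hB.comm v u]
  module

theorem quarticQuadraticEquation_diag (hB : IsSymmBiadditive B) (n : ℤ) :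
    QuarticQuadraticEquation n (fun x => B x x) := by
  intro x y
  have hnx := hB.diag_add_add_diag_sub (n • x) y
  have hx := hB.diag_add_add_diag_sub x y
  simp only [hB.zsmul₁, hB.zsmul₂] at hnx ⊢
  linear_combination (norm := module) hnx - n ^ 2 • hx

theorem smul {K : Type*} [Semiring K] [Module K Y] (hB : IsSymmBiadditive B) (c : K) :
    IsSymmBiadditive (fun a b => c • B a b) where
  add₁ a a' b := by rw [hB.add₁, smul_add]
  comm a b := by rw [hB.comm]

end IsSymmBiadditive

namespace IsSymmQuadriadditive

variable {D : X → X → X → X → Y}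

theorem comm₁₃ (hD : IsSymmQuadriadditive D) (a b c d : X) : D a b c d = D c b a d := by
  rw [hD.comm₁₂, hD.comm₂₃, hD.comm₁₂]

theorem comm₁₄ (hD : IsSymmQuadriadditive D) (a b c d : X) : D a b c d = D d b c a := by
  rw [hD.comm₃₄, hD.comm₁₃, hD.comm₃₄]

theorem zsmul₁ (hD : IsSymmQuadriadditive D) (m : ℤ) (a b c d : X) :
    D (m • a) b c d = m • D a b c d :=
  map_zsmul (AddMonoidHom.mk' (D · b c d) (hD.add₁ · · b c d)) m a

theorem add₂ (hD : IsSymmQuadriadditive D) (a b b' c d : X) :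
    D a (b + b') c d = D a b c d + D a b' c d := by
  simp only [hD.comm₁₂ a, hD.add₁]

theorem add₃ (hD : IsSymmQuadriadditive D) (a b c c' d : X) :
    D a b (c + c') d = D a b c d + D a b c' d := by
  simp only [hD.comm₁₃ a, hD.add₁]

theorem add₄ (hD : IsSymmQuadriadditive D) (a b c d d' : X) :
    D a b c (d + d') = D a b c d + D a b c d' := by
  simp only [hD.comm₁₄ a, hD.add₁]

theorem zsmul₂ (hD : IsSymmQuadriadditive D) (m : ℤ) (a b c d : X) :
    D a (m • b) c d = m • D a b c d := by
  simp only [hD.comm₁₂ a, hD.zsmul₁]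

theorem zsmul₃ (hD : IsSymmQuadriadditive D) (m : ℤ) (a b c d : X) :
    D a b (m • c) d = m • D a b c d := by
  simp only [hD.comm₁₃ a, hD.zsmul₁]

theorem zsmul₄ (hD : IsSymmQuadriadditive D) (m : ℤ) (a b c d : X) :
    D a b c (m • d) = m • D a b c d := by
  simp only [hD.comm₁₄ a, hD.zsmul₁]

theorem diag_add_add_diag_sub (hD : IsSymmQuadriadditive D) (u v : X) :
    D (u + v) (u + v) (u + v) (u + v) + D (u - v) (u - v) (u - v) (u - v) =
      2 • D u u u u + 12 • D u u v v + 2 • D v v v v := by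
  simp only [sub_eq_add_neg, ← neg_one_zsmul v, hD.add₁, hD.add₂, hD.add₃, hD.add₄,
    hD.zsmul₁, hD.zsmul₂, hD.zsmul₃, hD.zsmul₄]
  -- ordered rewriting with these instances puts `u` before `v` in every slot
  simp only [hD.comm₁₂ v u, hD.comm₂₃ _ v u, hD.comm₃₄ _ _ v u]
  module

theorem quarticQuadraticEquation_diag (hD : IsSymmQuadriadditive D) (n : ℤ) :
    QuarticQuadraticEquation n (fun x => D x x x x) := by
  intro x y
  have hnx := hD.diag_add_add_diag_sub (n • x) y
  have hx := hD.diag_add_add_diag_sub x y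
  simp only [hD.zsmul₁, hD.zsmul₂, hD.zsmul₃, hD.zsmul₄] at hnx ⊢
  linear_combination (norm := module) hnx - n ^ 2 • hx

theorem smul {K : Type*} [Semiring K] [Module K Y] (hD : IsSymmQuadriadditive D) (c : K) :
    IsSymmQuadriadditive (fun a b c' d => c • D a b c' d) where
  add₁ a a' b c d := by rw [hD.add₁, smul_add]
  comm₁₂ a b c d := by rw [hD.comm₁₂]
  comm₂₃ a b c d := by rw [hD.comm₂₃]
  comm₃₄ a b c d := by rw [hD.comm₃₄]

end IsSymmQuadriadditive

def pairingSum (Q : X → X → X → X → Y) (a b c d : X) : Y := Q a b c d + Q a c b d + Q a d b c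

/-- Under these symmetries `Q a b c d` only depends on the pairing `{{a, b}, {c, d}}`, and the
permutations of `{a, b, c, d}` permute its three pairings. -/
theorem isSymmQuadriadditive_pairingSum {Q : X → X → X → X → Y}
    (add₁ : ∀ a a' b c d, Q (a + a') b c d = Q a b c d + Q a' b c d)
    (comm₁₂ : ∀ a b c d, Q a b c d = Q b a c d) (comm₃₄ : ∀ a b c d, Q a b c d = Q a b d c)
    (comm_pairs : ∀ a b c d, Q a b c d = Q c d a b) :
    IsSymmQuadriadditive (pairingSum Q) where
  add₁ a a' b c d := by simp only [pairingSum, add₁]; abel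
  comm₁₂ a b c d := by simp only [pairingSum, comm₁₂ a b, comm_pairs b c, comm_pairs b d]; abel
  comm₂₃ a b c d := by simp only [pairingSum, comm₃₄ a d]; abel
  comm₃₄ a b c d := by simp only [pairingSum, comm₃₄ a b]; abel

def ParallelogramLaw (g : X → Y) : Prop :=
  ∀ u v, g (u + v) + g (u - v) = 2 • g u + 2 • g v

def polarDiff (g : X → Y) (a b : X) : Y := g (a + b) - g (a - b)

namespace ParallelogramLaw

variable {g h : X → Y}

theorem sub (hg : ParallelogramLaw g) (hh : ParallelogramLaw h) :
    ParallelogramLaw (fun x => g x - h x) := by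
  intro u v
  linear_combination (norm := module) hg u v - hh u v

variable [IsAddTorsionFree Y]

theorem map_zero (hg : ParallelogramLaw g) : g 0 = 0 := by
  have h00 := hg 0 0
  simp only [add_zero, sub_zero] at h00
  exact nsmul_right_injective two_ne_zero (by linear_combination (norm := module) -h00)

theorem map_neg (hg : ParallelogramLaw g) (v : X) : g (-v) = g v := by
  have h0v := hg 0 v
  rw [zero_add, zero_sub, hg.map_zero] at h0v
  linear_combination (norm := module) h0v

theorem map_add_self (hg : ParallelogramLaw g) (u : X) : g (u + u) = 4 • g u := by
  have huu := hg u u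
  rw [sub_self, hg.map_zero] at huu
  linear_combination (norm := module) huu

theorem polarDiff_comm (hg : ParallelogramLaw g) (a b : X) :
    polarDiff g a b = polarDiff g b a := by
  rw [polarDiff, polarDiff, add_comm, ← hg.map_neg (a - b), neg_sub]

theorem polarDiff_self (hg : ParallelogramLaw g) (a : X) : polarDiff g a a = 4 • g a := by
  rw [polarDiff, sub_self, hg.map_zero, hg.map_add_self, sub_zero]

/-- `p := polarDiff g · b` satisfies `p (x + y) + p (x - y) = 2 p x` and
`p (x + y) - p (x - y) = 2 p y`; adding the two gives additivity without dividing by `2` in `X`. -/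
theorem polarDiff_add_left (hg : ParallelogramLaw g) (x y b : X) :
    polarDiff g (x + y) b = polarDiff g x b + polarDiff g y b := by
  have h₁ := hg (x + b) y
  have h₂ := hg (x - b) y
  have h₃ := hg (y + b) x
  have h₄ := hg (y - b) x
  rw [add_right_comm] at h₁
  rw [sub_add_eq_add_sub] at h₂
  rw [show y + b + x = x + y + b by abel, show y + b - x = -(x - b - y) by abel,
    hg.map_neg] at h₃
  rw [show y - b + x = x + y - b by abel, show y - b - x = -(x + b - y) by abel,
    hg.map_neg] at h₄
  refine nsmul_right_injective two_ne_zero ?_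
  simp only [polarDiff]
  linear_combination (norm := module) h₁ - h₂ + h₃ - h₄

theorem isSymmBiadditive_polarDiff (hg : ParallelogramLaw g) : IsSymmBiadditive (polarDiff g) :=
  ⟨hg.polarDiff_add_left, hg.polarDiff_comm⟩

end ParallelogramLaw

def quadraticDefect (f : X → Y) (u v : X) : Y := f (u + v) + f (u - v) - 2 • f u - 2 • f v

def HasQuadraticDefect (f : X → Y) : Prop := ∀ w, ParallelogramLaw (quadraticDefect f · w)

def quadraticDefectPolar (f : X → Y) (a b c d : X) : Y :=
  polarDiff (fun s => polarDiff (quadraticDefect f s) c d) a b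

namespace HasQuadraticDefect

variable [IsAddTorsionFree Y] {f : X → Y}

theorem map_zero (hf : HasQuadraticDefect f) : f 0 = 0 := by
  have h := (hf 0).map_zero
  simp only [quadraticDefect, add_zero, sub_zero] at h
  exact nsmul_right_injective two_ne_zero (by linear_combination (norm := module) -h)

theorem map_neg (hf : HasQuadraticDefect f) (v : X) : f (-v) = f v := by
  have h := (hf v).map_zero
  simp only [quadraticDefect, zero_add, zero_sub, hf.map_zero] at h
  linear_combination (norm := module) h

theorem comm (hf : HasQuadraticDefect f) (u v : X) :
    quadraticDefect f u v = quadraticDefect f v u := by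
  rw [quadraticDefect, quadraticDefect, add_comm v, ← hf.map_neg (v - u), neg_sub]
  abel

theorem parallelogramLaw_right (hf : HasQuadraticDefect f) (u : X) :
    ParallelogramLaw (quadraticDefect f u) := by
  convert hf u using 1
  exact funext (hf.comm u)

theorem add_self_left (hf : HasQuadraticDefect f) (u v : X) :
    quadraticDefect f (u + u) v = 4 • quadraticDefect f u v :=
  (hf v).map_add_self u

theorem diag_add_add_diag_sub (hf : HasQuadraticDefect f) (a b : X) :
    quadraticDefect f (a + b) (a + b) + quadraticDefect f (a - b) (a - b) =
      2 • quadraticDefect f a a + 2 • quadraticDefect f b b + 12 • quadraticDefect f a b := by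
  have h₁ := hf (a + b) a b
  have h₂ := hf (a - b) a b
  have h₃ := hf a a b
  have h₄ := hf b a b
  beta_reduce at h₁ h₂ h₃ h₄
  rw [hf.comm (a - b), hf.comm a (a + b), hf.comm b (a + b)] at h₁
  rw [hf.comm a (a - b), hf.comm b (a - b)] at h₂
  rw [hf.comm b a] at h₃
  have hI : quadraticDefect f (a + b) (a - b) =
      quadraticDefect f a a + quadraticDefect f b b - 2 • quadraticDefect f a b := by
    simp only [quadraticDefect, add_add_sub_cancel, add_sub_sub_cancel, sub_self, hf.map_zero,
      ← two_nsmul]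
    abel
  linear_combination (norm := module) h₁ + h₂ + 2 • h₃ + 2 • h₄ - 2 • hI

theorem isSymmQuadriadditive_pairingSum (hf : HasQuadraticDefect f) :
    IsSymmQuadriadditive (pairingSum (quadraticDefectPolar f)) := by
  have hc (c d : X) : ParallelogramLaw (fun s => polarDiff (quadraticDefect f s) c d) :=
    (hf (c + d)).sub (hf (c - d))
  refine _root_.isSymmQuadriadditive_pairingSum
    (fun a a' b c d => (hc c d).polarDiff_add_left a a' b)
    (fun a b c d => (hc c d).polarDiff_comm a b) (fun a b c d => ?_) (fun a b c d => ?_)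
  · simp only [quadraticDefectPolar, (hf.parallelogramLaw_right _).polarDiff_comm c d]
  · simp only [quadraticDefectPolar, polarDiff, hf.comm (a + b), hf.comm (a - b)]
    abel

theorem quadraticDefectPolar_diag (hf : HasQuadraticDefect f) (x : X) :
    quadraticDefectPolar f x x x x = 16 • quadraticDefect f x x := by
  simp only [quadraticDefectPolar, polarDiff, sub_self, (hf _).map_zero,
    (hf.parallelogramLaw_right _).map_zero, hf.add_self_left, hf.comm x (x + x)]
  module

theorem parallelogramLaw_sub_diag (K : Type*) [Field K] [CharZero K] [Module K Y]
    (hf : HasQuadraticDefect f) :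
    ParallelogramLaw (fun x => f x - (12 : K)⁻¹ • quadraticDefect f x x) := by
  intro u v
  have hdef : f (u + v) + f (u - v) = 2 • f u + 2 • f v + quadraticDefect f u v := by
    rw [quadraticDefect]
    abel
  linear_combination (norm := module) hdef - (12 : K)⁻¹ • hf.diag_add_add_diag_sub u v

theorem exists_decomposition (K : Type*) [Field K] [CharZero K] [Module K Y]
    (hf : HasQuadraticDefect f) :
    ∃ (D : X → X → X → X → Y) (B : X → X → Y), IsSymmQuadriadditive D ∧ IsSymmBiadditive B ∧
      ∀ x, f x = D x x x x + B x x := by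
  have hT := hf.parallelogramLaw_sub_diag K
  refine ⟨_, _, hf.isSymmQuadriadditive_pairingSum.smul (576 : K)⁻¹,
    hT.isSymmBiadditive_polarDiff.smul (4 : K)⁻¹, fun x => ?_⟩
  -- `pairingSum Q x x x x = 3 • Q x x x x = 48 • P x x`, and `12 • 48 = 576`
  simp only [pairingSum, hT.polarDiff_self, hf.quadraticDefectPolar_diag]
  module

end HasQuadraticDefect

namespace QuarticQuadraticEquation

variable [IsAddTorsionFree Y] {n : ℤ} {f : X → Y}

theorem map_zero (hf : QuarticQuadraticEquation n f) (hn : n ^ 2 ≠ 1) : f 0 = 0 := by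
  have h := hf 0 0
  simp only [smul_zero, add_zero, sub_zero] at h
  refine zsmul_right_injective (n := 2 * (n ^ 2 - 1))
    (mul_ne_zero two_ne_zero (sub_ne_zero.mpr hn)) ?_
  linear_combination (norm := module) h

theorem map_neg (hf : QuarticQuadraticEquation n f) (hn : n ^ 2 ≠ 1) (v : X) :
    f (-v) = f v := by
  have h := hf 0 v
  simp only [smul_zero, zero_add, zero_sub, hf.map_zero hn] at h
  refine zsmul_right_injective (n := n ^ 2 - 1) (sub_ne_zero.mpr hn) ?_
  linear_combination (norm := module) -h

theorem apply_add_smul (hf : QuarticQuadraticEquation n f) (hn : n ^ 2 ≠ 1) (x y : X) :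
    f (y + n • x) + f (y - n • x) =
      (n ^ 2) • f (y + x) + (n ^ 2) • f (y - x) + (2 : ℤ) • f (n • x)
        - (2 * n ^ 2) • f x - (2 * (n ^ 2 - 1)) • f y := by
  rw [add_comm y, add_comm y, ← neg_sub, hf.map_neg hn, ← neg_sub x, hf.map_neg hn]
  exact hf x y

theorem hasQuadraticDefect (hf : QuarticQuadraticEquation n f) (hn₀ : n ≠ 0) (hn : n ^ 2 ≠ 1) :
    HasQuadraticDefect f := by
  intro z x y
  have h₁ := hf (x + y) z
  have h₂ := hf (x - y) z
  have h₃ := hf x (n • y + z)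
  have h₄ := hf x (n • y - z)
  have h₅ := hf.apply_add_smul hn y (x + z)
  have h₆ := hf.apply_add_smul hn y (x - z)
  have h₇ := hf x (n • y)
  have h₈ := hf.apply_add_smul hn y x
  have h₉ := hf y z
  rw [smul_add] at h₁
  rw [smul_sub] at h₂
  simp only [← add_assoc, sub_add_eq_sub_sub] at h₃
  simp only [← add_sub_assoc, ← sub_add] at h₄
  simp only [add_right_comm x z, add_sub_right_comm x z] at h₅
  simp only [sub_add_eq_add_sub, sub_right_comm x z] at h₆
  refine zsmul_right_injective (n := n ^ 2 * (n ^ 2 - 1))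
    (mul_ne_zero (pow_ne_zero 2 hn₀) (sub_ne_zero.mpr hn)) ?_
  simp only [quadraticDefect]
  linear_combination (norm := module) h₁ + h₂ - h₃ - h₄ - n ^ 2 • h₅ - n ^ 2 • h₆ + 2 • h₇
    + (2 * n ^ 2) • h₈ + (2 * n ^ 2 - 2) • h₉

end QuarticQuadraticEquation

end

theorem stmt_9_general {X Y : Type*} [AddCommGroup X] [AddCommGroup Y] [Module ℝ Y]
    (n : ℤ) (hn0 : n ≠ 0) (hn1 : n ≠ 1) (hn2 : n ≠ -1) (f : X → Y) :
    (∀ x y : X, f (n • x + y) + f (n • x - y) =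
      (n ^ 2) • f (x + y) + (n ^ 2) • f (x - y) + (2 : ℤ) • f (n • x)
        - (2 * n ^ 2) • f x - (2 * (n ^ 2 - 1)) • f y) ↔
    (∃ (D : X → X → X → X → Y) (B : X → X → Y),
      (∀ a a' b c d : X, D (a + a') b c d = D a b c d + D a' b c d) ∧
      (∀ a b c d : X, D a b c d = D b a c d) ∧
      (∀ a b c d : X, D a b c d = D a c b d) ∧
      (∀ a b c d : X, D a b c d = D a b d c) ∧
      (∀ a a' b : X, B (a + a') b = B a b + B a' b) ∧
      (∀ a b : X, B a b = B b a) ∧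
      (∀ x : X, f x = D x x x x + B x x)) := by
  have : IsAddTorsionFree Y := .of_isTorsionFree ℝ Y
  constructor
  · intro hf
    have hn : n ^ 2 ≠ 1 := by simp [sq_eq_one_iff, hn1, hn2]
    obtain ⟨D, B, hD, hB, hfDB⟩ :=
      (QuarticQuadraticEquation.hasQuadraticDefect hf hn0 hn).exists_decomposition ℝ
    exact ⟨D, B, hD.add₁, hD.comm₁₂, hD.comm₂₃, hD.comm₃₄, hB.add₁, hB.comm, hfDB⟩
  · rintro ⟨D, B, hD₁, hD₁₂, hD₂₃, hD₃₄, hB₁, hB₁₂, hfDB⟩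
    obtain rfl : f = fun x => D x x x x + B x x := funext hfDB
    exact (IsSymmQuadriadditive.quarticQuadraticEquation_diag ⟨hD₁, hD₁₂, hD₂₃, hD₃₄⟩ n).add
      (IsSymmBiadditive.quarticQuadraticEquation_diag ⟨hB₁, hB₁₂⟩ n)

theorem stmt_9 {X Y : Type*} [AddCommGroup X] [Module ℝ X] [AddCommGroup Y] [Module ℝ Y]
    (n : ℤ) (hn0 : n ≠ 0) (hn1 : n ≠ 1) (hn2 : n ≠ -1) (f : X → Y) :
    (∀ x y : X, f (n • x + y) + f (n • x - y) =
      (n ^ 2) • f (x + y) + (n ^ 2) • f (x - y) + (2 : ℤ) • f (n • x)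
        - (2 * n ^ 2) • f x - (2 * (n ^ 2 - 1)) • f y) ↔
    (∃ (D : X → X → X → X → Y) (B : X → X → Y),
      (∀ a a' b c d : X, D (a + a') b c d = D a b c d + D a' b c d) ∧
      (∀ a b c d : X, D a b c d = D b a c d) ∧
      (∀ a b c d : X, D a b c d = D a c b d) ∧
      (∀ a b c d : X, D a b c d = D a b d c) ∧
      (∀ a a' b : X, B (a + a') b = B a b + B a' b) ∧
      (∀ a b : X, B a b = B b a) ∧
      (∀ x : X, f x = D x x x x + B x x)) :=
  stmt_9_general n hn0 hn1 hn2 f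
end

section
/- Suppose f : X → Y satisfies f(0) = 0 and ‖f(nx+y) + f(nx−y) − n²f(x+y) − n²f(x−y) − 2f(nx) + 2n²f(x) + 2(n²−1)f(y)‖ ≤ θ for all x, y ∈ X, where θ ≥ 0. Then there exists a constant C (depending only on n and θ) such that ‖f(4x) − 20f(2x) + 64f(x)‖ ≤ C for all x ∈ X. -/
/-!
Write `Δf(x, y) = f(x + y) + f(x - y) - 2 f(x) - 2 f(y)`. The hypothesis says
`‖Δf(n x, y) - n² Δf(x, y)‖ ≤ θ`, and when `f 0 = 0` the target expression is
`Δf(2x, 2x) - 16 Δf(x, x)`. Taking `x = 0` shows that `f` is even up to a bounded error, so `f`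
may be replaced by its even part `g`. For even `g` the third difference
`D(u, v, w) = Δ(Δg(·, w))(u, v)` is symmetric in `u, v, w`; scaling any single argument by `n`
multiplies it by `n²`, and scaling `u` and `v` together multiplies it by `n²` as well, both up to
bounded errors. Comparing the two ways of scaling `u` and `v` bounds `(n⁴ - n²) D`, hence `D`.
Since `D(u, u, w) = Δg(2u, w) - 4 Δg(u, w)`, this gives `Δg(2x, 2x) ≈ 16 Δg(x, x)`.
-/

section QuadDiff

variable {X Y : Type*} [AddCommGroup X] [AddCommGroup Y]

def quadDiff (f : X → Y) (x y : X) : Y := f (x + y) + f (x - y) - 2 • f x - 2 • f y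

variable {g : X → Y}

lemma quadDiff_comm (hg : ∀ t, g (-t) = g t) (x y : X) : quadDiff g x y = quadDiff g y x := by
  rw [quadDiff, quadDiff, add_comm y, ← neg_sub x y, hg]
  abel

lemma quadDiff_neg_left (hg : ∀ t, g (-t) = g t) (x y : X) :
    quadDiff g (-x) y = quadDiff g x y := by
  rw [quadDiff, quadDiff, neg_add_eq_sub, ← neg_sub x y, ← neg_add' x y, hg, hg, hg]
  abel

lemma quadDiff_zero_left (hg : ∀ t, g (-t) = g t) (h0 : g 0 = 0) (y : X) :
    quadDiff g 0 y = 0 := by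
  rw [quadDiff, zero_add, zero_sub, hg, h0]
  abel

lemma quadDiff_quadDiff_comm (hg : ∀ t, g (-t) = g t) (u v w : X) :
    quadDiff (quadDiff g · w) u v = quadDiff (quadDiff g · v) u w := by
  simp only [quadDiff]
  rw [show u + w + v = u + v + w by abel, show u + w - v = u - v + w by abel,
    show u - w + v = u + v - w by abel, show u - w - v = u - v - w by abel,
    show w + v = v + w by abel, ← neg_sub v w, hg]
  abel

end QuadDiff

section Norm

variable {X Y : Type*} [AddCommGroup X] [SeminormedAddCommGroup Y]

lemma norm_quadDiff_le {φ : X → Y} {θ : ℝ} (hφ : ∀ t, ‖φ t‖ ≤ θ) (x y : X) :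
    ‖quadDiff φ x y‖ ≤ 6 * θ := by
  have h2 : ∀ t, ‖2 • φ t‖ ≤ 2 * θ := fun t =>
    norm_nsmul_le.trans (by push_cast; linarith [hφ t])
  calc ‖quadDiff φ x y‖
      ≤ ‖φ (x + y)‖ + ‖φ (x - y)‖ + ‖2 • φ x‖ + ‖2 • φ y‖ := norm_sub_le_of_le
        (norm_sub_le_of_le (norm_add_le _ _) le_rfl) le_rfl
    _ ≤ 6 * θ := by linarith [hφ (x + y), hφ (x - y), h2 x, h2 y]

end Norm

lemma norm_le_of_two_approx_smul {Y : Type*} [SeminormedAddCommGroup Y] [NormedSpace ℝ Y]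
    {a b c : Y} {N ε : ℝ} (hN : 1 < N) (hab : ‖a - N • b‖ ≤ ε) (hac : ‖a - N • c‖ ≤ ε)
    (hcb : ‖c - N • b‖ ≤ ε) : ‖b‖ ≤ (N + 2) * ε / (N ^ 2 - N) := by
  have hpos : 0 < N ^ 2 - N := by nlinarith
  have key : (N ^ 2 - N) • b = (a - N • b) - (a - N • c) - N • (c - N • b) := by module
  rw [le_div_iff₀ hpos, mul_comm, ← abs_of_pos hpos, ← Real.norm_eq_abs, ← norm_smul, key]
  calc ‖(a - N • b) - (a - N • c) - N • (c - N • b)‖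
      ≤ ‖a - N • b‖ + ‖a - N • c‖ + ‖N • (c - N • b)‖ :=
        norm_sub_le_of_le (norm_sub_le _ _) le_rfl
    _ ≤ ε + ε + N * ε := by
        rw [norm_smul, Real.norm_of_nonneg (by linarith)]
        gcongr
    _ = (N + 2) * ε := by ring

section Linear

variable {R X Y : Type*} [AddCommGroup X] [AddCommGroup Y]

lemma quadDiff_sub_smul [CommRing R] [Module R Y] (φ ψ : X → Y) (c : R) (x y : X) :
    quadDiff (fun t => φ t - c • ψ t) x y = quadDiff φ x y - c • quadDiff ψ x y := by
  simp only [quadDiff]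
  module

lemma quadDiff_comp_smul [Ring R] [Module R X] (φ : X → Y) (m : R) (x y : X) :
    quadDiff (fun t => φ (m • t)) x y = quadDiff φ (m • x) (m • y) := by
  simp only [quadDiff, smul_add, smul_sub]

end Linear

section Scaling

variable {X Y : Type*} [AddCommGroup X] [Module ℝ X] [NormedAddCommGroup Y] [NormedSpace ℝ Y]
  {g : X → Y} {m N θ : ℝ} (hscale : ∀ u v, ‖quadDiff g (m • u) v - N • quadDiff g u v‖ ≤ θ)
include hscale

lemma norm_quadDiff_quadDiff_smul_sub_le (u v w : X) :
    ‖quadDiff (quadDiff g · w) (m • u) (m • v) - N • quadDiff (quadDiff g · w) u v‖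
      ≤ 6 * θ := by
  rw [← quadDiff_comp_smul, ← quadDiff_sub_smul]
  exact norm_quadDiff_le (fun t => hscale t w) u v

variable (hg : ∀ t, g (-t) = g t)
include hg

lemma norm_quadDiff_quadDiff_smul_right_sub_le (u v w : X) :
    ‖quadDiff (quadDiff g · w) u (m • v) - N • quadDiff (quadDiff g · w) u v‖ ≤ 6 * θ := by
  simp only [quadDiff_quadDiff_comm hg u _ w]
  rw [← quadDiff_sub_smul]
  refine norm_quadDiff_le (fun t => ?_) u w
  rw [quadDiff_comm hg t, quadDiff_comm hg t]
  exact hscale v t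

lemma norm_quadDiff_quadDiff_smul_left_sub_le (u v w : X) :
    ‖quadDiff (quadDiff g · w) (m • u) v - N • quadDiff (quadDiff g · w) u v‖ ≤ 6 * θ := by
  have hφ : ∀ t, quadDiff g (-t) w = quadDiff g t w := fun t => quadDiff_neg_left hg t w
  rw [quadDiff_comm hφ (m • u), quadDiff_comm hφ u]
  exact norm_quadDiff_quadDiff_smul_right_sub_le hscale hg v u w

lemma norm_quadDiff_quadDiff_le (hN : 1 < N) (u v w : X) :
    ‖quadDiff (quadDiff g · w) u v‖ ≤ (N + 2) * (6 * θ) / (N ^ 2 - N) :=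
  norm_le_of_two_approx_smul hN (norm_quadDiff_quadDiff_smul_sub_le hscale u v w)
    (norm_quadDiff_quadDiff_smul_left_sub_le hscale hg u (m • v) w)
    (norm_quadDiff_quadDiff_smul_right_sub_le hscale hg u v w)

lemma norm_quadDiff_two_zsmul_sub_le (h0 : g 0 = 0) (hN : 1 < N) (u w : X) :
    ‖quadDiff g ((2 : ℤ) • u) w - (4 : ℤ) • quadDiff g u w‖
      ≤ (N + 2) * (6 * θ) / (N ^ 2 - N) := by
  have h := norm_quadDiff_quadDiff_le hscale hg hN u u w
  rw [quadDiff, sub_self, quadDiff_zero_left hg h0, ← two_zsmul] at h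
  convert h using 2
  abel

lemma norm_quartic_combination_le (h0 : g 0 = 0) (hN : 1 < N) (x : X) :
    ‖g ((4 : ℤ) • x) - (20 : ℤ) • g ((2 : ℤ) • x) + (64 : ℤ) • g x‖
      ≤ 5 * ((N + 2) * (6 * θ) / (N ^ 2 - N)) := by
  have h2 := norm_quadDiff_two_zsmul_sub_le hscale hg h0 hN x ((2 : ℤ) • x)
  have h1 := norm_quadDiff_two_zsmul_sub_le hscale hg h0 hN x x
  have key : g ((4 : ℤ) • x) - (20 : ℤ) • g ((2 : ℤ) • x) + (64 : ℤ) • g x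
      = (quadDiff g ((2 : ℤ) • x) ((2 : ℤ) • x) - (4 : ℤ) • quadDiff g x ((2 : ℤ) • x))
        + (4 : ℤ) • (quadDiff g ((2 : ℤ) • x) x - (4 : ℤ) • quadDiff g x x) := by
    rw [quadDiff_comm hg x ((2 : ℤ) • x)]
    simp only [quadDiff, sub_self, h0]
    rw [show (2 : ℤ) • x + (2 : ℤ) • x = (4 : ℤ) • x by abel, show (2 : ℤ) • x - x = x by abel,
      ← two_zsmul]
    abel
  have h4 := norm_zsmul_le (4 : ℤ) (quadDiff g ((2 : ℤ) • x) x - (4 : ℤ) • quadDiff g x x)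
  rw [Int.norm_eq_abs] at h4
  norm_num at h4
  rw [key]
  calc _ ≤ _ + 4 * _ :=
        norm_add_le_of_le h2 (h4.trans (mul_le_mul_of_nonneg_left h1 (by norm_num)))
    _ = _ := by ring

end Scaling

section EvenPart

variable {X Y : Type*} [AddCommGroup X] [NormedAddCommGroup Y] [NormedSpace ℝ Y]

noncomputable def evenPart (f : X → Y) (t : X) : Y := (2 : ℝ)⁻¹ • (f t + f (-t))

variable {f : X → Y}

lemma evenPart_neg (t : X) : evenPart f (-t) = evenPart f t := by
  rw [evenPart, evenPart, neg_neg, add_comm]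

lemma evenPart_zero (h0 : f 0 = 0) : evenPart f 0 = 0 := by
  simp [evenPart, h0]

lemma quadDiff_evenPart (x y : X) :
    quadDiff (evenPart f) x y = (2 : ℝ)⁻¹ • (quadDiff f x y + quadDiff f (-x) (-y)) := by
  simp only [quadDiff, evenPart, neg_add, neg_sub', sub_neg_eq_add]
  module

variable [Module ℝ X] {m N θ : ℝ}
  (hscale : ∀ u v, ‖quadDiff f (m • u) v - N • quadDiff f u v‖ ≤ θ)
include hscale

lemma norm_quadDiff_evenPart_smul_sub_le (u v : X) :
    ‖quadDiff (evenPart f) (m • u) v - N • quadDiff (evenPart f) u v‖ ≤ θ := by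
  have key : quadDiff (evenPart f) (m • u) v - N • quadDiff (evenPart f) u v
      = (2 : ℝ)⁻¹ • ((quadDiff f (m • u) v - N • quadDiff f u v)
        + (quadDiff f (m • -u) (-v) - N • quadDiff f (-u) (-v))) := by
    rw [quadDiff_evenPart, quadDiff_evenPart, smul_neg]
    module
  rw [key, norm_smul, Real.norm_of_nonneg (by norm_num)]
  linarith [norm_add_le_of_le (hscale u v) (hscale (-u) (-v))]

lemma norm_sub_comp_neg_le (h0 : f 0 = 0) (hN : 1 < N) (t : X) :
    ‖f t - f (-t)‖ ≤ θ / (N - 1) := by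
  have key : quadDiff f (m • 0) t - N • quadDiff f 0 t = (N - 1) • (f t - f (-t)) := by
    simp only [quadDiff, smul_zero, zero_add, zero_sub, h0]
    module
  have h := hscale 0 t
  rw [key, norm_smul, Real.norm_of_nonneg (by linarith)] at h
  rw [le_div_iff₀ (by linarith)]
  linarith

lemma norm_sub_evenPart_le (h0 : f 0 = 0) (hN : 1 < N) (t : X) :
    ‖f t - evenPart f t‖ ≤ θ / (N - 1) / 2 := by
  have key : f t - evenPart f t = (2 : ℝ)⁻¹ • (f t - f (-t)) := by
    rw [evenPart]
    module
  rw [key, norm_smul, Real.norm_of_nonneg (by norm_num)]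
  linarith [norm_sub_comp_neg_le hscale h0 hN t]

end EvenPart

lemma norm_quartic_combination_le_of_norm_sub_le {X Y : Type*} [AddCommGroup X]
    [NormedAddCommGroup Y] {f g : X → Y} {δ : ℝ} (hfg : ∀ t, ‖f t - g t‖ ≤ δ) (x : X) :
    ‖f ((4 : ℤ) • x) - (20 : ℤ) • f ((2 : ℤ) • x) + (64 : ℤ) • f x‖
      ≤ ‖g ((4 : ℤ) • x) - (20 : ℤ) • g ((2 : ℤ) • x) + (64 : ℤ) • g x‖ + 85 * δ := by
  have key : f ((4 : ℤ) • x) - (20 : ℤ) • f ((2 : ℤ) • x) + (64 : ℤ) • f x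
      = (g ((4 : ℤ) • x) - (20 : ℤ) • g ((2 : ℤ) • x) + (64 : ℤ) • g x)
        + ((f ((4 : ℤ) • x) - g ((4 : ℤ) • x)) - (20 : ℤ) • (f ((2 : ℤ) • x) - g ((2 : ℤ) • x))
          + (64 : ℤ) • (f x - g x)) := by
    abel
  have h20 := norm_zsmul_le (20 : ℤ) (f ((2 : ℤ) • x) - g ((2 : ℤ) • x))
  have h64 := norm_zsmul_le (64 : ℤ) (f x - g x)
  rw [Int.norm_eq_abs] at h20 h64
  norm_num at h20 h64
  rw [key]
  refine (norm_add_le _ _).trans (add_le_add_right ?_ _)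
  calc _ ≤ ‖f ((4 : ℤ) • x) - g ((4 : ℤ) • x)‖ + 20 * ‖f ((2 : ℤ) • x) - g ((2 : ℤ) • x)‖
        + 64 * ‖f x - g x‖ :=
        norm_add_le_of_le (norm_sub_le_of_le le_rfl h20) h64
    _ ≤ δ + 20 * δ + 64 * δ := by gcongr <;> apply hfg
    _ = 85 * δ := by ring

lemma quadDiff_smul_sub_smul_quadDiff {X Y : Type*} [AddCommGroup X] [Module ℝ X]
    [AddCommGroup Y] [Module ℝ Y] (f : X → Y) (n : ℤ) (x y : X) :
    quadDiff f ((n : ℝ) • x) y - ((n : ℝ) ^ 2) • quadDiff f x y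
      = f (n • x + y) + f (n • x - y) - (n ^ 2) • f (x + y) - (n ^ 2) • f (x - y)
        - (2 : ℤ) • f (n • x) + (2 * n ^ 2) • f x + (2 * (n ^ 2 - 1)) • f y := by
  simp only [quadDiff, ← Int.cast_smul_eq_zsmul ℝ]
  push_cast
  module

theorem stmt_10_general {X Y : Type*} [NormedAddCommGroup X] [NormedSpace ℝ X]
    [NormedAddCommGroup Y] [NormedSpace ℝ Y]
    (n : ℤ) (hn0 : n ≠ 0) (hn1 : n ≠ 1) (hn2 : n ≠ -1)
    (θ : ℝ) (f : X → Y) (h0 : f 0 = 0)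
    (hf : ∀ x y : X, ‖f (n • x + y) + f (n • x - y) - (n ^ 2) • f (x + y)
        - (n ^ 2) • f (x - y) - (2 : ℤ) • f (n • x) + (2 * n ^ 2) • f x
        + (2 * (n ^ 2 - 1)) • f y‖ ≤ θ) :
    ∃ C : ℝ, ∀ x : X, ‖f ((4 : ℤ) • x) - (20 : ℤ) • f ((2 : ℤ) • x) + (64 : ℤ) • f x‖ ≤ C := by
  set N : ℝ := (n : ℝ) ^ 2
  have hN : 1 < N := by
    have : 1 < |n| := by rw [lt_abs]; omega
    have : (1 : ℝ) < |(n : ℝ)| := by exact_mod_cast this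
    simpa [N, ← sq_abs] using one_lt_pow₀ this two_ne_zero
  have hscale (u v : X) : ‖quadDiff f ((n : ℝ) • u) v - N • quadDiff f u v‖ ≤ θ := by
    rw [quadDiff_smul_sub_smul_quadDiff]
    exact hf u v
  refine ⟨5 * ((N + 2) * (6 * θ) / (N ^ 2 - N)) + 85 * (θ / (N - 1) / 2), fun x => ?_⟩
  refine (norm_quartic_combination_le_of_norm_sub_le (norm_sub_evenPart_le hscale h0 hN) x).trans
    (add_le_add_left ?_ _)
  exact norm_quartic_combination_le (norm_quadDiff_evenPart_smul_sub_le hscale) evenPart_neg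
    (evenPart_zero h0) hN x

theorem stmt_10 {X Y : Type*} [NormedAddCommGroup X] [NormedSpace ℝ X]
    [NormedAddCommGroup Y] [NormedSpace ℝ Y] [CompleteSpace Y]
    (n : ℤ) (hn0 : n ≠ 0) (hn1 : n ≠ 1) (hn2 : n ≠ -1)
    (θ : ℝ) (hθ : 0 ≤ θ) (f : X → Y) (h0 : f 0 = 0)
    (hf : ∀ x y : X, ‖f (n • x + y) + f (n • x - y) - (n ^ 2) • f (x + y)
        - (n ^ 2) • f (x - y) - (2 : ℤ) • f (n • x) + (2 * n ^ 2) • f x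
        + (2 * (n ^ 2 - 1)) • f y‖ ≤ θ) :
    ∃ C : ℝ, ∀ x : X, ‖f ((4 : ℤ) • x) - (20 : ℤ) • f ((2 : ℤ) • x) + (64 : ℤ) • f x‖ ≤ C :=
  stmt_10_general n hn0 hn1 hn2 θ f h0 hf
end

section
/- Let g : X → Y satisfy ‖g(2x) − 4g(x)‖ ≤ ψ(x) for all x ∈ X, where ψ : X → [0,∞) satisfies Σ_{i=1}^∞ 4^i ψ(x/2^i) < ∞ and lim_{m→∞} 4^m ψ(x/2^m) = 0 for all x. Then the limit Q(x) = lim_{m→∞} 4^m g(x/2^m) exists for every x ∈ X and satisfies Q(2x) = 4Q(x) and ‖g(x) − Q(x)‖ ≤ Σ_{i=1}^∞ 4^{i−1} ψ(x/2^i) for all x ∈ X. -/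
/-!
Write `Q_m(x) = 4^m g(x/2^m)`. Applying the hypothesis at `x/2^(m+1)` and multiplying by `4^m`
gives `‖Q_m(x) - Q_(m+1)(x)‖ ≤ 4^m ψ(x/2^(m+1))`, a summable sequence of steps; so `Q_m(x)` is
Cauchy, its limit `Q(x)` lies within the sum of the steps of `Q_0(x) = g(x)`, and
`Q_(m+1)(2x) = 4 Q_m(x)` passes to the limit as `Q(2x) = 4 Q(x)`.
-/

open Filter Topology

theorem Metric.exists_tendsto_dist_le_tsum_of_dist_le {α : Type*} [PseudoMetricSpace α]
    [CompleteSpace α] {f : ℕ → α} {d : ℕ → ℝ} (hf : ∀ n, dist (f n) (f (n + 1)) ≤ d n)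
    (hd : Summable d) : ∃ a, Tendsto f atTop (𝓝 a) ∧ dist (f 0) a ≤ ∑' n, d n := by
  obtain ⟨a, ha⟩ := cauchySeq_tendsto_of_complete (cauchySeq_of_dist_le_of_summable d hf hd)
  exact ⟨a, ha, dist_le_tsum_of_dist_le_of_tendsto₀ d hf hd ha⟩

section QuadraticRescale

variable {X Y : Type*} [AddCommGroup X] [Module ℝ X] [NormedAddCommGroup Y] [NormedSpace ℝ Y]

theorem two_zsmul_one_div_two_pow_succ_smul (x : X) (m : ℕ) :
    (2 : ℤ) • ((1 : ℝ) / 2 ^ (m + 1)) • x = ((1 : ℝ) / 2 ^ m) • x := by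
  rw [← Int.cast_smul_eq_zsmul ℝ, smul_smul]
  congr 1
  push_cast
  ring

theorem one_div_two_pow_succ_smul_two_zsmul (x : X) (m : ℕ) :
    ((1 : ℝ) / 2 ^ (m + 1)) • (2 : ℤ) • x = ((1 : ℝ) / 2 ^ m) • x := by
  rw [smul_comm, two_zsmul_one_div_two_pow_succ_smul]

theorem four_zsmul_eq_smul (y : Y) : (4 : ℤ) • y = (4 : ℝ) • y := by
  rw [← Int.cast_smul_eq_zsmul ℝ]
  norm_num

noncomputable def quadraticRescale (g : X → Y) (m : ℕ) (x : X) : Y :=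
  (4 : ℝ) ^ m • g (((1 : ℝ) / 2 ^ m) • x)

@[simp]
theorem quadraticRescale_zero (g : X → Y) (x : X) : quadraticRescale g 0 x = g x := by
  simp [quadraticRescale]

theorem quadraticRescale_succ_two_zsmul (g : X → Y) (m : ℕ) (x : X) :
    quadraticRescale g (m + 1) ((2 : ℤ) • x) = (4 : ℝ) • quadraticRescale g m x := by
  rw [quadraticRescale, quadraticRescale, one_div_two_pow_succ_smul_two_zsmul, pow_succ',
    mul_smul]

theorem norm_quadraticRescale_sub_succ_le {g : X → Y} {ψ : X → ℝ}
    (hbound : ∀ x, ‖g ((2 : ℤ) • x) - (4 : ℤ) • g x‖ ≤ ψ x) (x : X) (m : ℕ) :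
    ‖quadraticRescale g m x - quadraticRescale g (m + 1) x‖
      ≤ (4 : ℝ) ^ m * ψ (((1 : ℝ) / 2 ^ (m + 1)) • x) := by
  have hb := hbound (((1 : ℝ) / 2 ^ (m + 1)) • x)
  rw [two_zsmul_one_div_two_pow_succ_smul, four_zsmul_eq_smul] at hb
  calc ‖quadraticRescale g m x - quadraticRescale g (m + 1) x‖
      = ‖(4 : ℝ) ^ m • (g (((1 : ℝ) / 2 ^ m) • x)
          - (4 : ℝ) • g (((1 : ℝ) / 2 ^ (m + 1)) • x))‖ := by
        rw [quadraticRescale, quadraticRescale, smul_sub, pow_succ, mul_smul]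
    _ ≤ (4 : ℝ) ^ m * ψ (((1 : ℝ) / 2 ^ (m + 1)) • x) := by
        rw [norm_smul, Real.norm_of_nonneg (by positivity)]
        gcongr

end QuadraticRescale

theorem stmt_11_general {X Y : Type*} [AddCommGroup X] [Module ℝ X]
    [NormedAddCommGroup Y] [NormedSpace ℝ Y] [CompleteSpace Y]
    (g : X → Y) (ψ : X → ℝ)
    (hbound : ∀ x : X, ‖g ((2 : ℤ) • x) - (4 : ℤ) • g x‖ ≤ ψ x)
    (hsum : ∀ x : X, Summable (fun i : ℕ => (4 : ℝ) ^ (i + 1) * ψ (((1 : ℝ) / 2 ^ (i + 1)) • x))) :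
    ∃ Q : X → Y,
      (∀ x : X, Filter.Tendsto (fun m : ℕ => (4 : ℝ) ^ m • g (((1 : ℝ) / 2 ^ m) • x))
        Filter.atTop (nhds (Q x))) ∧
      (∀ x : X, Q ((2 : ℤ) • x) = (4 : ℤ) • Q x) ∧
      (∀ x : X, ‖g x - Q x‖ ≤ ∑' i : ℕ, (4 : ℝ) ^ i * ψ (((1 : ℝ) / 2 ^ (i + 1)) • x)) := by
  have hsteps (x : X) :
      Summable fun i : ℕ => (4 : ℝ) ^ i * ψ (((1 : ℝ) / 2 ^ (i + 1)) • x) := by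
    refine (summable_mul_left_iff (a := (4 : ℝ)) (by norm_num)).mp ((hsum x).congr fun i => ?_)
    ring
  choose Q hQ hdist using fun x => Metric.exists_tendsto_dist_le_tsum_of_dist_le
    (fun m => (dist_eq_norm _ _).trans_le (norm_quadraticRescale_sub_succ_le hbound x m))
    (hsteps x)
  refine ⟨Q, hQ, fun x => ?_, fun x => by simpa [dist_eq_norm] using hdist x⟩
  have hshift := (hQ ((2 : ℤ) • x)).comp (tendsto_add_atTop_nat 1)
  simp only [Function.comp_def, quadraticRescale_succ_two_zsmul] at hshift
  rw [four_zsmul_eq_smul]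
  exact tendsto_nhds_unique hshift ((hQ x).const_smul (4 : ℝ))

theorem stmt_11 {X Y : Type*} [AddCommGroup X] [Module ℝ X]
    [NormedAddCommGroup Y] [NormedSpace ℝ Y] [CompleteSpace Y]
    (g : X → Y) (ψ : X → ℝ) (hψ : ∀ x : X, 0 ≤ ψ x)
    (hbound : ∀ x : X, ‖g ((2 : ℤ) • x) - (4 : ℤ) • g x‖ ≤ ψ x)
    (hsum : ∀ x : X, Summable (fun i : ℕ => (4 : ℝ) ^ (i + 1) * ψ (((1 : ℝ) / 2 ^ (i + 1)) • x)))
    (hlim : ∀ x : X,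
      Filter.Tendsto (fun m : ℕ => (4 : ℝ) ^ m * ψ (((1 : ℝ) / 2 ^ m) • x))
        Filter.atTop (nhds 0)) :
    ∃ Q : X → Y,
      (∀ x : X, Filter.Tendsto (fun m : ℕ => (4 : ℝ) ^ m • g (((1 : ℝ) / 2 ^ m) • x))
        Filter.atTop (nhds (Q x))) ∧
      (∀ x : X, Q ((2 : ℤ) • x) = (4 : ℤ) • Q x) ∧
      (∀ x : X, ‖g x - Q x‖ ≤ ∑' i : ℕ, (4 : ℝ) ^ i * ψ (((1 : ℝ) / 2 ^ (i + 1)) • x)) :=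
  stmt_11_general g ψ hbound hsum
end

section
/- Let h : X → Y satisfy ‖h(2x) − 16h(x)‖ ≤ ψ(x) for all x ∈ X, where ψ : X → [0,∞) satisfies Σ_{i=1}^∞ 16^i ψ(x/2^i) < ∞ and lim_{m→∞} 16^m ψ(x/2^m) = 0 for all x. Then the limit T(x) = lim_{m→∞} 16^m h(x/2^m) exists for every x ∈ X and satisfies T(2x) = 16T(x) and ‖h(x) − T(x)‖ ≤ Σ_{i=1}^∞ 16^{i−1} ψ(x/2^i) for all x ∈ X. -/
/-!
Hyers' direct method. Writing `u m x = k ^ m • h ((c ^ m)⁻¹ • x)`, the approximate functional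
equation `‖h (c • x) - k • h x‖ ≤ ψ x` applied at `(c ^ (m + 1))⁻¹ • x` bounds consecutive
differences by `|k| ^ m * ψ ((c ^ (m + 1))⁻¹ • x)`. Summability of these bounds makes `u · x`
Cauchy, its limit `T x` is within their sum of `h x = u 0 x`, and `u (m + 1) (c • x) = k • u m x`
passes to the limit as `T (c • x) = k • T x`.
-/

open Filter Topology

section HyersSeq

variable {X Y : Type*} [AddCommGroup X] [Module ℝ X] [NormedAddCommGroup Y] [NormedSpace ℝ Y]

noncomputable def hyersSeq (c k : ℝ) (h : X → Y) (x : X) (m : ℕ) : Y :=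
  k ^ m • h ((c ^ m)⁻¹ • x)

variable {c k : ℝ} {h : X → Y} {ψ : X → ℝ}

@[simp]
theorem hyersSeq_zero (x : X) : hyersSeq c k h x 0 = h x := by
  simp [hyersSeq]

theorem inv_pow_succ_smul_smul (hc : c ≠ 0) (m : ℕ) (x : X) :
    (c ^ (m + 1))⁻¹ • c • x = (c ^ m)⁻¹ • x := by
  rw [smul_smul, pow_succ, mul_inv, mul_assoc, inv_mul_cancel₀ hc, mul_one]

theorem hyersSeq_smul_succ (hc : c ≠ 0) (x : X) (m : ℕ) :
    hyersSeq c k h (c • x) (m + 1) = k • hyersSeq c k h x m := by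
  rw [hyersSeq, hyersSeq, inv_pow_succ_smul_smul hc, smul_smul, pow_succ']

theorem dist_hyersSeq_succ_le (hc : c ≠ 0) (hbound : ∀ x, ‖h (c • x) - k • h x‖ ≤ ψ x)
    (x : X) (m : ℕ) :
    dist (hyersSeq c k h x m) (hyersSeq c k h x (m + 1)) ≤
      |k| ^ m * ψ ((c ^ (m + 1))⁻¹ • x) := by
  set y := (c ^ (m + 1))⁻¹ • x
  have hy : c • y = (c ^ m)⁻¹ • x := by
    rw [smul_comm, inv_pow_succ_smul_smul hc]
  have hdiff : hyersSeq c k h x m - hyersSeq c k h x (m + 1) = k ^ m • (h (c • y) - k • h y) := by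
    rw [hyersSeq, hyersSeq, hy, smul_sub, smul_smul, ← pow_succ]
  rw [dist_eq_norm, hdiff, norm_smul, norm_pow, Real.norm_eq_abs]
  exact mul_le_mul_of_nonneg_left (hbound y) (by positivity)

variable (hc : c ≠ 0) (hbound : ∀ x, ‖h (c • x) - k • h x‖ ≤ ψ x) {x : X}
  (hsum : Summable fun i : ℕ => |k| ^ i * ψ ((c ^ (i + 1))⁻¹ • x))
include hc hbound hsum

theorem tendsto_hyersSeq [CompleteSpace Y] :
    Tendsto (hyersSeq c k h x) atTop (𝓝 (limUnder atTop (hyersSeq c k h x))) :=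
  (cauchySeq_of_dist_le_of_summable _ (dist_hyersSeq_succ_le hc hbound x) hsum).tendsto_limUnder

theorem limUnder_hyersSeq_smul [CompleteSpace Y] :
    limUnder atTop (hyersSeq c k h (c • x)) = k • limUnder atTop (hyersSeq c k h x) := by
  refine Tendsto.limUnder_eq ((tendsto_add_atTop_iff_nat 1).mp ?_)
  simpa only [hyersSeq_smul_succ hc] using (tendsto_hyersSeq hc hbound hsum).const_smul k

theorem dist_limUnder_hyersSeq_le [CompleteSpace Y] :
    dist (h x) (limUnder atTop (hyersSeq c k h x)) ≤
      ∑' i : ℕ, |k| ^ i * ψ ((c ^ (i + 1))⁻¹ • x) := by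
  simpa using dist_le_tsum_of_dist_le_of_tendsto₀ _ (dist_hyersSeq_succ_le hc hbound x) hsum
    (tendsto_hyersSeq hc hbound hsum)

end HyersSeq

theorem stmt_12_general {X Y : Type*} [AddCommGroup X] [Module ℝ X]
    [NormedAddCommGroup Y] [NormedSpace ℝ Y] [CompleteSpace Y]
    (h : X → Y) (ψ : X → ℝ)
    (hbound : ∀ x : X, ‖h ((2 : ℤ) • x) - (16 : ℤ) • h x‖ ≤ ψ x)
    (hsum : ∀ x : X, Summable (fun i : ℕ => (16 : ℝ) ^ (i + 1) * ψ (((1 : ℝ) / 2 ^ (i + 1)) • x))) :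
    ∃ T : X → Y,
      (∀ x : X, Filter.Tendsto (fun m : ℕ => (16 : ℝ) ^ m • h (((1 : ℝ) / 2 ^ m) • x))
        Filter.atTop (nhds (T x))) ∧
      (∀ x : X, T ((2 : ℤ) • x) = (16 : ℤ) • T x) ∧
      (∀ x : X, ‖h x - T x‖ ≤ ∑' i : ℕ, (16 : ℝ) ^ i * ψ (((1 : ℝ) / 2 ^ (i + 1)) • x)) := by
  have hbound' : ∀ x, ‖h ((2 : ℝ) • x) - (16 : ℝ) • h x‖ ≤ ψ x := fun x => by
    exact_mod_cast hbound x
  have hsum' : ∀ x, Summable fun i : ℕ => |(16 : ℝ)| ^ i * ψ (((2 : ℝ) ^ (i + 1))⁻¹ • x) :=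
    fun x => ((hsum x).div_const 16).congr fun i => by
      rw [abs_of_pos (by norm_num), pow_succ, one_div]
      ring
  refine ⟨fun x => limUnder atTop (hyersSeq 2 16 h x), fun x => ?_, fun x => ?_, fun x => ?_⟩
  · simp only [one_div]
    exact tendsto_hyersSeq two_ne_zero hbound' (hsum' x)
  · exact_mod_cast limUnder_hyersSeq_smul two_ne_zero hbound' (hsum' x)
  · simpa only [← dist_eq_norm, abs_of_pos (by norm_num : (0 : ℝ) < 16), one_div] using
      dist_limUnder_hyersSeq_le two_ne_zero hbound' (hsum' x)

theorem stmt_12 {X Y : Type*} [AddCommGroup X] [Module ℝ X]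
    [NormedAddCommGroup Y] [NormedSpace ℝ Y] [CompleteSpace Y]
    (h : X → Y) (ψ : X → ℝ) (hψ : ∀ x : X, 0 ≤ ψ x)
    (hbound : ∀ x : X, ‖h ((2 : ℤ) • x) - (16 : ℤ) • h x‖ ≤ ψ x)
    (hsum : ∀ x : X, Summable (fun i : ℕ => (16 : ℝ) ^ (i + 1) * ψ (((1 : ℝ) / 2 ^ (i + 1)) • x)))
    (hlim : ∀ x : X,
      Filter.Tendsto (fun m : ℕ => (16 : ℝ) ^ m * ψ (((1 : ℝ) / 2 ^ m) • x))
        Filter.atTop (nhds 0)) :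
    ∃ T : X → Y,
      (∀ x : X, Filter.Tendsto (fun m : ℕ => (16 : ℝ) ^ m • h (((1 : ℝ) / 2 ^ m) • x))
        Filter.atTop (nhds (T x))) ∧
      (∀ x : X, T ((2 : ℤ) • x) = (16 : ℤ) • T x) ∧
      (∀ x : X, ‖h x - T x‖ ≤ ∑' i : ℕ, (16 : ℝ) ^ i * ψ (((1 : ℝ) / 2 ^ (i + 1)) • x)) :=
  stmt_12_general h ψ hbound hsum
end

section
/- If a function F : X → Y is simultaneously quadratic (F(x+y)+F(x−y) = 2F(x)+2F(y) for all x,y) and quartic (F(2x+y)+F(2x−y) = 4F(x+y)+4F(x−y)+24F(x)−6F(y) for all x,y), then F = 0. -/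
theorem stmt_16 {X Y : Type*} [AddCommGroup X] [Module ℝ X] [AddCommGroup Y] [Module ℝ Y]
    (F : X → Y)
    (hquad : ∀ x y : X, F (x + y) + F (x - y) = (2 : ℤ) • F x + (2 : ℤ) • F y)
    (hquart : ∀ x y : X, F ((2 : ℤ) • x + y) + F ((2 : ℤ) • x - y) =
      (4 : ℤ) • F (x + y) + (4 : ℤ) • F (x - y) + (24 : ℤ) • F x - (6 : ℤ) • F y) :
    F = 0 := by
  have key : ∀ (n : ℤ) (v : Y), n ≠ 0 → n • v = 0 → v = 0 := by
    intro n v hn hv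
    rw [← Int.cast_smul_eq_zsmul ℝ, smul_eq_zero] at hv
    rcases hv with h | h
    · exact absurd (by exact_mod_cast h) hn
    · exact h
  have h0 : F 0 = 0 := by
    have h := hquad 0 0
    simp only [add_zero, sub_zero] at h
    apply key 2 _ (by norm_num)
    rw [← two_zsmul] at h
    have h' : (2:ℤ) • F 0 = (2:ℤ) • F 0 + (2:ℤ) • F 0 := h
    exact (left_eq_add.mp h')
  funext x
  show F x = 0
  apply key 24 _ (by norm_num)
  have h1 := hquad x x
  have h2 := hquart x 0
  simp only [add_zero, sub_zero, sub_self, h0, smul_zero] at h1 h2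
  have h3 : F (x + x) = F ((2:ℤ) • x) := by rw [two_zsmul]
  rw [h3, ← two_zsmul] at h1
  have e1 : F ((2:ℤ) • x) = (4:ℤ) • F x := by
    rw [h1]
    rw [smul_smul]; norm_num
  rw [e1] at h2
  exact (left_eq_add.mp h2)
end

section
/- Let Q₃, T₃ : X → Y with Q₃ quadratic (Q₃(x+y)+Q₃(x−y)=2Q₃(x)+2Q₃(y)) and T₃ quartic (T₃(2x+y)+T₃(2x−y)=4T₃(x+y)+4T₃(x−y)+24T₃(x)−6T₃(y)), and suppose ‖Q₃(x) − T₃(x)‖ ≤ φ(x) for all x ∈ X, where lim_{m→∞} 4^m φ(x/2^m) = 0 and lim_{m→∞} (1/16^m) φ(2^m x) = 0 for all x ∈ X. Then both Q₃ and T₃ vanish identically, i.e. Q₃ = T₃ = 0. -/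
theorem stmt_19 {X Y : Type*} [AddCommGroup X] [Module ℝ X]
    [NormedAddCommGroup Y] [NormedSpace ℝ Y]
    (Q₃ T₃ : X → Y) (φ : X → ℝ) (hφ : ∀ x : X, 0 ≤ φ x)
    (hquad : ∀ x y : X, Q₃ (x + y) + Q₃ (x - y) = (2 : ℤ) • Q₃ x + (2 : ℤ) • Q₃ y)
    (hquart : ∀ x y : X, T₃ ((2 : ℤ) • x + y) + T₃ ((2 : ℤ) • x - y) =
      (4 : ℤ) • T₃ (x + y) + (4 : ℤ) • T₃ (x - y) + (24 : ℤ) • T₃ x - (6 : ℤ) • T₃ y)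
    (hbound : ∀ x : X, ‖Q₃ x - T₃ x‖ ≤ φ x)
    (hlim1 : ∀ x : X,
      Filter.Tendsto (fun m : ℕ => (4 : ℝ) ^ m * φ (((1 : ℝ) / 2 ^ m) • x))
        Filter.atTop (nhds 0))
    (hlim2 : ∀ x : X,
      Filter.Tendsto (fun m : ℕ => (1 / 16 : ℝ) ^ m * φ ((2 ^ m : ℤ) • x))
        Filter.atTop (nhds 0)) :
    Q₃ = 0 ∧ T₃ = 0 := by
  have hQ0 : Q₃ 0 = 0 := by
    have h := hquad 0 0
    simp only [add_zero, sub_zero] at h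
    linear_combination (norm := module) (-2⁻¹ : ℝ) • h
  have hT0 : T₃ 0 = 0 := by
    have h := hquart 0 0
    simp only [add_zero, sub_zero, smul_zero, zero_add, zero_sub] at h
    linear_combination (norm := module) (-24⁻¹ : ℝ) • h
  have hQ2 : ∀ x : X, Q₃ ((2 : ℤ) • x) = (4 : ℝ) • Q₃ x := by
    intro x
    rw [two_zsmul]
    have h := hquad x x
    rw [sub_self, hQ0] at h
    linear_combination (norm := module) h
  have hT2 : ∀ x : X, T₃ ((2 : ℤ) • x) = (16 : ℝ) • T₃ x := by
    intro x
    have h := hquart x 0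
    simp only [add_zero, sub_zero, hT0, smul_zero] at h
    linear_combination (norm := module) (2⁻¹ : ℝ) • h
  have keyQ : ∀ (x : X) (m : ℕ), Q₃ ((2 ^ m : ℤ) • x) = (4 : ℝ) ^ m • Q₃ x := by
    intro x m
    induction m with
    | zero => simp
    | succ m ih =>
      have hx : ((2 : ℤ) ^ (m + 1)) • x = (2 : ℤ) • ((2 ^ m : ℤ) • x) := by
        rw [pow_succ, mul_comm, mul_smul]
      rw [hx, hQ2, ih, smul_smul, pow_succ]
      congr 1
      ring
  have keyT : ∀ (x : X) (m : ℕ), T₃ ((2 ^ m : ℤ) • x) = (16 : ℝ) ^ m • T₃ x := by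
    intro x m
    induction m with
    | zero => simp
    | succ m ih =>
      have hx : ((2 : ℤ) ^ (m + 1)) • x = (2 : ℤ) • ((2 ^ m : ℤ) • x) := by
        rw [pow_succ, mul_comm, mul_smul]
      rw [hx, hT2, ih, smul_smul, pow_succ]
      congr 1
      ring
  have hT : ∀ x : X, T₃ x = 0 := by
    intro x
    have hb2 : ∀ m : ℕ, ‖(4⁻¹ : ℝ) ^ m • Q₃ x - T₃ x‖ ≤ (1 / 16 : ℝ) ^ m * φ ((2 ^ m : ℤ) • x) := by
      intro m
      have heq : (4⁻¹ : ℝ) ^ m • Q₃ x - T₃ x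
          = (1 / 16 : ℝ) ^ m • ((4 : ℝ) ^ m • Q₃ x - (16 : ℝ) ^ m • T₃ x) := by
        match_scalars <;> norm_num [← mul_pow]
      rw [heq, norm_smul, Real.norm_eq_abs, abs_of_nonneg (by positivity)]
      have hb : ‖(4 : ℝ) ^ m • Q₃ x - (16 : ℝ) ^ m • T₃ x‖ ≤ φ ((2 ^ m : ℤ) • x) := by
        rw [← keyQ, ← keyT]; exact hbound _
      exact mul_le_mul_of_nonneg_left hb (by positivity)
    have hto : Filter.Tendsto (fun m : ℕ => (4⁻¹ : ℝ) ^ m • Q₃ x - T₃ x)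
        Filter.atTop (nhds 0) := squeeze_zero_norm hb2 (hlim2 x)
    have hto2 : Filter.Tendsto (fun m : ℕ => (4⁻¹ : ℝ) ^ m • Q₃ x - T₃ x)
        Filter.atTop (nhds ((0 : ℝ) • Q₃ x - T₃ x)) := by
      exact (((tendsto_pow_atTop_nhds_zero_of_lt_one (by norm_num) (by norm_num)).smul_const
        (Q₃ x)).sub_const (T₃ x))
    have := tendsto_nhds_unique hto hto2
    simpa using this.symm
  have hQb : ∀ x : X, ‖Q₃ x‖ ≤ φ x := fun x => by simpa [hT x] using hbound x
  have hQ : ∀ x : X, Q₃ x = 0 := by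
    intro x
    have key2 : ∀ m : ℕ, ‖Q₃ x‖ ≤ (4 : ℝ) ^ m * φ (((1 : ℝ) / 2 ^ m) • x) := by
      intro m
      have hx : (2 ^ m : ℤ) • (((1 : ℝ) / 2 ^ m) • x) = x := by
        rw [← Int.cast_smul_eq_zsmul ℝ, smul_smul]
        push_cast
        rw [mul_one_div, div_self (by positivity), one_smul]
      calc ‖Q₃ x‖ = ‖Q₃ ((2 ^ m : ℤ) • (((1 : ℝ) / 2 ^ m) • x))‖ := by rw [hx]
        _ = (4 : ℝ) ^ m * ‖Q₃ (((1 : ℝ) / 2 ^ m) • x)‖ := by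
            rw [keyQ, norm_smul, Real.norm_eq_abs, abs_of_nonneg (by positivity)]
        _ ≤ (4 : ℝ) ^ m * φ (((1 : ℝ) / 2 ^ m) • x) :=
            mul_le_mul_of_nonneg_left (hQb _) (by positivity)
    have h0 : ‖Q₃ x‖ ≤ 0 := ge_of_tendsto (hlim1 x) (Filter.Eventually.of_forall key2)
    simpa using le_antisymm h0 (norm_nonneg _)
  exact ⟨funext hQ, funext hT⟩
end
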